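/- arXiv:2003.13065 — 5 statements merged into one kernel-verified Lean document; each statement's English description precedes it below -/
import Mathlib

section
/- Let G = (V,E) be a finite simple undirected connected graph whose vertex set is partitioned as V = A ∪ B with B nonempty, such that d_G(v) ≤ d for every v ∈ A (with d ≥ 1), and such that for some real 0 < δ < 1/2 every nonempty subset A' ⊆ A satisfies |∂_G(A')| ≥ δ·|A'|. Let T be any natural number with T ≥ (16·d²/δ²)·(ln|V| + ln(2d/δ)). Then for every v ∈ A, a T-step lazy random walk on G started at v reaches some vertex of B with probability at least δ/(4d); equivalently, 1 − (Q^T·𝟙)_v ≥ δ/(4d), where Q is the substochastic lazy-walk matrix absorbed on B. -/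
open scoped Classical

noncomputable section

/-- The edge boundary `∂_G(S)`: the set of edges of `G` with exactly one
endpoint in `S`. -/
def edgeBoundary {V : Type*} (G : SimpleGraph V) (S : Set V) : Set (Sym2 V) :=
  {e | e ∈ G.edgeSet ∧ ∃ u v, e = s(u, v) ∧ u ∈ S ∧ v ∉ S}

/-- The substochastic lazy-random-walk matrix of `G` absorbed on `B`:
`Q u v = 1/2` if `u = v` and `u ∉ B`, `Q u v = 1/(2·deg u)` if `u ∉ B` and
`{u,v} ∈ E`, and `0` otherwise. -/
def lazyAbsorbed {V : Type*} (G : SimpleGraph V) (B : Set V) : Matrix V V ℝ :=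
  fun u v =>
    if u ∈ B then 0
    else if u = v then 1 / 2
    else if G.Adj u v then 1 / (2 * ({w | G.Adj u w}.ncard : ℝ))
    else 0

/-!
Write `Q` for the absorbed lazy walk, `Φ(g) = ∑ᵤ deg(u) g(u)²` (`degNormSq`) and
`D(g) = ∑_{u ~ v} (g u - g v)²` over ordered adjacent pairs (`dirichletSum`). For `g` vanishing
on `B`, one lazy step averages `g` with its neighbourhood means, and Cauchy–Schwarz gives
`Φ(Q g) ≤ Φ(g) - D(g)/4`. Peeling off level sets, each of which is a subset of `A`, turns the
expansion hypothesis into the co-area inequality `2δ ∑ h ≤ ∑_{u ~ v} |h u - h v|` for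
`h ≥ 0` supported in `A`; applied to `h = g²` together with Cauchy–Schwarz it gives
`δ² Φ(g) ≤ d² D(g)`. So `Φ` decays by the factor `1 - δ²/(4d²)` per step. Starting from
`Φ(Q 𝟙) ≤ d |V|`, after `T` steps `(Q^T 𝟙)(v)² ≤ Φ(Q^T 𝟙) ≤ 1/2`, and
`1 - 1/√2 ≥ δ/(4d)`.
-/

open Matrix

theorem support_subset_of_union_eq_univ {α : Type*} {A B : Set α} (hunion : A ∪ B = Set.univ)
    {g : α → ℝ} (hgB : ∀ u ∈ B, g u = 0) : Function.support g ⊆ A := fun u hu =>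
  (hunion ▸ Set.mem_univ u : u ∈ A ∪ B).resolve_right fun huB => hu (hgB u huB)

/-- The layer `m • 1_S` and the rest `h - m • 1_S` are comonotone, so their differences along an
edge have the same sign. -/
theorem abs_sub_eq_abs_sub_layer_add {α : Type*} {S : Set α} {h : α → ℝ} {m : ℝ}
    (hm0 : 0 ≤ m) (hS : ∀ v ∉ S, h v = 0) (hm : ∀ v ∈ S, m ≤ h v) (u v : α) :
    |h u - h v| = |(h u - m * S.indicator 1 u) - (h v - m * S.indicator 1 v)|
      + m * |S.indicator 1 u - S.indicator (1 : α → ℝ) v| := by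
  by_cases hu : u ∈ S <;> by_cases hv : v ∈ S
  · simp [hu, hv]
  · have := hm u hu
    rw [Set.indicator_of_mem hu, Set.indicator_of_notMem hv, hS v hv, Pi.one_apply,
      abs_of_nonneg (by linarith), abs_of_nonneg (by linarith), abs_of_nonneg (by norm_num)]
    ring
  · have := hm v hv
    rw [Set.indicator_of_mem hv, Set.indicator_of_notMem hu, hS u hu, Pi.one_apply,
      abs_of_nonpos (by linarith), abs_of_nonpos (by linarith), abs_of_nonpos (by norm_num)]
    ring
  · simp [hS u hu, hS v hv, hu, hv]

section Expansion

variable {V : Type*} [Fintype V] (G : SimpleGraph V)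

theorem ncard_setOf_adj (u : V) : {w | G.Adj u w}.ncard = G.degree u := by
  rw [Set.ncard_eq_toFinset_card']
  rfl

theorem sum_neighborFinset_comm {M : Type*} [AddCommMonoid M] (F : V → V → M) :
    ∑ u, ∑ v ∈ G.neighborFinset u, F u v = ∑ u, ∑ v ∈ G.neighborFinset u, F v u := by
  simp only [SimpleGraph.neighborFinset_eq_filter, Finset.sum_filter]
  rw [Finset.sum_comm]
  simp_rw [G.adj_comm]

theorem ncard_edgeBoundary_eq_sum (S : Set V) :
    ((edgeBoundary G S).ncard : ℝ) =
      ∑ u, ∑ v ∈ G.neighborFinset u, if u ∈ S ∧ v ∉ S then 1 else 0 := by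
  set P := ({p : V × V | G.Adj p.1 p.2 ∧ p.1 ∈ S ∧ p.2 ∉ S} : Finset (V × V))
  have himage : edgeBoundary G S = (fun p : V × V => s(p.1, p.2)) '' P := by
    ext e
    constructor
    · rintro ⟨he, u, v, rfl, hu, hv⟩
      exact ⟨(u, v), by simp [P, G.mem_edgeSet.1 he, hu, hv], rfl⟩
    · rintro ⟨⟨u, v⟩, hp, rfl⟩
      simp only [P, Finset.coe_filter, Finset.mem_univ, true_and, Set.mem_ofPred_eq] at hp
      exact ⟨hp.1, u, v, rfl, hp.2⟩
  have hinj : Set.InjOn (fun p : V × V => s(p.1, p.2)) P := by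
    rintro ⟨u, v⟩ hp ⟨u', v'⟩ hp' he
    simp only [P, Finset.coe_filter, Finset.mem_univ, true_and, Set.mem_ofPred_eq] at hp hp'
    rcases Sym2.eq_iff.1 he with ⟨rfl, rfl⟩ | ⟨rfl, rfl⟩
    · rfl
    · exact absurd hp.2.1 hp'.2.2
  rw [himage, hinj.ncard_image, Set.ncard_coe_finset, Finset.card_filter,
    Fintype.sum_prod_type]
  push_cast
  refine Finset.sum_congr rfl fun u _ => ?_
  rw [SimpleGraph.neighborFinset_eq_filter, Finset.sum_filter]
  refine Finset.sum_congr rfl fun v _ => ?_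
  by_cases h : G.Adj u v <;> simp [h]

theorem sum_abs_sub_indicator_eq (S : Set V) :
    ∑ u, ∑ v ∈ G.neighborFinset u, |S.indicator 1 u - S.indicator 1 v|
      = 2 * ((edgeBoundary G S).ncard : ℝ) := by
  have hsplit : ∀ u v, |S.indicator (1 : V → ℝ) u - S.indicator 1 v|
      = (if u ∈ S ∧ v ∉ S then 1 else 0) + (if v ∈ S ∧ u ∉ S then 1 else 0) := by
    intro u v
    by_cases hu : u ∈ S <;> by_cases hv : v ∈ S <;> simp [hu, hv]
  simp_rw [hsplit, Finset.sum_add_distrib]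
  rw [sum_neighborFinset_comm G (fun u v => if v ∈ S ∧ u ∉ S then (1 : ℝ) else 0),
    ncard_edgeBoundary_eq_sum]
  ring

theorem sum_abs_sub_eq_sum_abs_sub_layer_add {S : Set V} {h : V → ℝ} {m : ℝ} (hm0 : 0 ≤ m)
    (hS : ∀ v ∉ S, h v = 0) (hm : ∀ v ∈ S, m ≤ h v) :
    ∑ u, ∑ v ∈ G.neighborFinset u, |h u - h v|
      = ∑ u, ∑ v ∈ G.neighborFinset u,
          |(h u - m * S.indicator 1 u) - (h v - m * S.indicator 1 v)|
        + m * (2 * (edgeBoundary G S).ncard) := by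
  rw [← sum_abs_sub_indicator_eq, Finset.mul_sum, ← Finset.sum_add_distrib]
  refine Finset.sum_congr rfl fun u _ => ?_
  rw [Finset.mul_sum, ← Finset.sum_add_distrib]
  exact Finset.sum_congr rfl fun v _ => abs_sub_eq_abs_sub_layer_add hm0 hS hm u v

/-- Induction on the support: peel off the lowest level set `S` of `h`; it lies in `A`, so it has
at least `δ |S|` boundary edges. -/
theorem two_mul_sum_le_sum_abs_sub {A : Set V} {δ : ℝ}
    (hexp : ∀ A' ⊆ A, A'.Nonempty →
      δ * (A'.ncard : ℝ) ≤ ((edgeBoundary G A').ncard : ℝ))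
    {h : V → ℝ} (h0 : 0 ≤ h) (hA : Function.support h ⊆ A) :
    2 * δ * ∑ v, h v ≤ ∑ u, ∑ v ∈ G.neighborFinset u, |h u - h v| := by
  induction hn : (Function.support h).ncard using Nat.strong_induction_on generalizing h with
  | _ n ih =>
  set S := Function.support h
  rcases S.eq_empty_or_nonempty with hS | hS
  · have : h = 0 := Function.support_eq_empty_iff.1 hS
    subst this
    simp
  obtain ⟨v₀, hv₀, hmin⟩ := S.toFinset.exists_min_image h (by simpa using hS)
  rw [Set.mem_toFinset] at hv₀
  set m := h v₀
  have hm : ∀ v ∈ S, m ≤ h v := fun v hv => hmin v (Set.mem_toFinset.2 hv)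
  have hm0 : 0 ≤ m := h0 v₀
  have hS0 : ∀ v ∉ S, h v = 0 := fun v => Function.notMem_support.1
  set h' : V → ℝ := fun v => h v - m * S.indicator 1 v
  have h'0 : 0 ≤ h' := fun v => by
    by_cases hv : v ∈ S
    · simpa [h', hv] using hm v hv
    · simp [h', hv, hS0 v hv]
  have hsub : Function.support h' ⊆ S := fun v hv => by
    by_contra hvS
    exact hv (by simp [h', hvS, hS0 v hvS])
  have hlt : (Function.support h').ncard < n := hn ▸ Set.ncard_lt_ncard
    ((Set.ssubset_iff_of_subset hsub).2 ⟨v₀, hv₀, by simp [h', hv₀, m]⟩)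
  have ih' := ih _ hlt h'0 (hsub.trans hA) rfl
  have hsum : ∑ v, h v = ∑ v, h' v + m * S.ncard := by
    simp only [h', Finset.sum_sub_distrib, Set.indicator_apply, Pi.one_apply, mul_ite, mul_one,
      mul_zero, Finset.sum_ite, Finset.sum_const_zero, add_zero, Finset.sum_const, nsmul_eq_mul,
      Set.ncard_eq_toFinset_card']
    rw [show Finset.univ.filter (· ∈ S) = S.toFinset by ext; simp]
    ring
  rw [hsum, sum_abs_sub_eq_sum_abs_sub_layer_add G hm0 hS0 hm]
  nlinarith [hexp S hA hS]

def degNormSq (g : V → ℝ) : ℝ := ∑ u, (G.degree u : ℝ) * g u ^ 2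

def dirichletSum (g : V → ℝ) : ℝ := ∑ u, ∑ v ∈ G.neighborFinset u, (g u - g v) ^ 2

theorem sum_neighborFinset_sq_left (g : V → ℝ) :
    ∑ u, ∑ _v ∈ G.neighborFinset u, g u ^ 2 = degNormSq G g := by
  simp [degNormSq, Finset.sum_const, nsmul_eq_mul]

theorem sum_neighborFinset_sq_right (g : V → ℝ) :
    ∑ u, ∑ v ∈ G.neighborFinset u, g v ^ 2 = degNormSq G g := by
  rw [sum_neighborFinset_comm G (fun _ v => g v ^ 2), sum_neighborFinset_sq_left]

theorem sum_neighborFinset_sq_add_mul (g : V → ℝ) (c : ℝ) :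
    ∑ u, ∑ v ∈ G.neighborFinset u, (g u + c * g v) ^ 2
      = (1 + c ^ 2) * degNormSq G g + 2 * c * ∑ u, ∑ v ∈ G.neighborFinset u, g u * g v := by
  have hexpand : ∀ u v, (g u + c * g v) ^ 2 = g u ^ 2 + c ^ 2 * g v ^ 2 + 2 * c * (g u * g v) :=
    fun u v => by ring
  simp only [hexpand, Finset.sum_add_distrib, ← Finset.mul_sum, sum_neighborFinset_sq_left,
    sum_neighborFinset_sq_right]
  ring

theorem dirichletSum_eq (g : V → ℝ) :
    dirichletSum G g = 2 * degNormSq G g - 2 * ∑ u, ∑ v ∈ G.neighborFinset u, g u * g v := by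
  have := sum_neighborFinset_sq_add_mul G g (-1)
  simp only [← sub_eq_add_neg, neg_one_mul] at this
  rw [dirichletSum, this]
  ring

theorem dirichletSum_nonneg (g : V → ℝ) : 0 ≤ dirichletSum G g :=
  Finset.sum_nonneg fun _ _ => Finset.sum_nonneg fun _ _ => sq_nonneg _

theorem sum_neighborFinset_sq_add (g : V → ℝ) :
    ∑ u, ∑ v ∈ G.neighborFinset u, (g u + g v) ^ 2
      = 4 * degNormSq G g - dirichletSum G g := by
  have := sum_neighborFinset_sq_add_mul G g 1
  simp only [one_mul, one_pow, mul_one] at this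
  rw [this, dirichletSum_eq]
  ring

theorem sq_sum_abs_sub_sq_le {g : V → ℝ} (hg0 : 0 ≤ g) :
    (∑ u, ∑ v ∈ G.neighborFinset u, |g u ^ 2 - g v ^ 2|) ^ 2
      ≤ dirichletSum G g * (4 * degNormSq G g - dirichletSum G g) := by
  have hfactor : ∀ u v, |g u ^ 2 - g v ^ 2| = |g u - g v| * (g u + g v) := fun u v => by
    rw [show g u ^ 2 - g v ^ 2 = (g u - g v) * (g u + g v) by ring, abs_mul,
      abs_of_nonneg (add_nonneg (hg0 u) (hg0 v))]
  simp_rw [hfactor]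
  rw [← sum_neighborFinset_sq_add, dirichletSum]
  simp_rw [← sq_abs (g _ - g _)]
  simp only [Finset.sum_sigma']
  exact Finset.sum_mul_sq_le_sq_mul_sq _ _ _

/-- The co-area inequality for `g²`, then Cauchy–Schwarz over the edges. -/
theorem sq_mul_degNormSq_le_dirichletSum {A : Set V} {δ : ℝ} {d : ℕ} (hδ : 0 ≤ δ)
    (hexp : ∀ A' ⊆ A, A'.Nonempty →
      δ * (A'.ncard : ℝ) ≤ ((edgeBoundary G A').ncard : ℝ))
    (hdeg : ∀ v ∈ A, G.degree v ≤ d) {g : V → ℝ} (hg0 : 0 ≤ g)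
    (hgA : Function.support g ⊆ A) :
    δ ^ 2 * degNormSq G g ≤ (d : ℝ) ^ 2 * dirichletSum G g := by
  set N := degNormSq G g
  set D := dirichletSum G g
  have hcoarea := two_mul_sum_le_sum_abs_sub G hexp (h := fun v => g v ^ 2)
    (fun v => sq_nonneg (g v)) (by rwa [Function.support_pow _ two_ne_zero])
  have hCS := sq_sum_abs_sub_sq_le G hg0
  have hNd : N ≤ d * ∑ v, g v ^ 2 := by
    rw [Finset.mul_sum]
    refine Finset.sum_le_sum fun u _ => ?_
    by_cases hu : g u = 0
    · simp [hu]
    · exact mul_le_mul_of_nonneg_right (by exact_mod_cast hdeg u (hgA hu)) (sq_nonneg _)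
  have hD := dirichletSum_nonneg G g
  have hN : 0 ≤ N := Finset.sum_nonneg fun u _ => by positivity
  have hT : 0 ≤ ∑ v, g v ^ 2 := Finset.sum_nonneg fun v _ => sq_nonneg _
  have hδT : (δ * ∑ v, g v ^ 2) ^ 2 ≤ D * N := by
    have := (pow_le_pow_left₀ (by positivity) hcoarea 2).trans hCS
    nlinarith
  have hsq : (δ * N) ^ 2 ≤ d ^ 2 * D * N := calc
    (δ * N) ^ 2 ≤ (d * (δ * ∑ v, g v ^ 2)) ^ 2 :=
      pow_le_pow_left₀ (by positivity) (by nlinarith) 2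
    _ ≤ d ^ 2 * (D * N) := by rw [mul_pow]; gcongr
    _ = d ^ 2 * D * N := by ring
  rcases hN.eq_or_lt with hN0 | hNpos
  · rw [← hN0, mul_zero]
    positivity
  · nlinarith

end Expansion

section LazyWalk

variable {V : Type*} [Fintype V] (G : SimpleGraph V) (B : Set V)

theorem lazyAbsorbed_mulVec_apply (x : V → ℝ) (u : V) :
    (lazyAbsorbed G B *ᵥ x) u =
      if u ∈ B then 0 else (x u + (∑ v ∈ G.neighborFinset u, x v) / G.degree u) / 2 := by
  by_cases hu : u ∈ B
  · simp [Matrix.mulVec, dotProduct, lazyAbsorbed, hu]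
  have hentry : ∀ v, lazyAbsorbed G B u v * x v
      = (if u = v then x v / 2 else 0) + (if G.Adj u v then x v / (2 * G.degree u) else 0) := by
    intro v
    by_cases huv : u = v
    · subst huv
      simp only [lazyAbsorbed, hu, ↓reduceIte, one_div, SimpleGraph.irrefl, add_zero]
      ring
    · by_cases hadj : G.Adj u v
      · simp only [lazyAbsorbed, hu, ↓reduceIte, huv, hadj, ncard_setOf_adj, one_div,
          _root_.mul_inv_rev, zero_add]
        ring
      · simp [lazyAbsorbed, hu, huv, hadj]
  simp only [hu, if_false, Matrix.mulVec, dotProduct, hentry, Finset.sum_add_distrib,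
    Finset.sum_ite_eq, Finset.mem_univ, if_true, ← Finset.sum_filter,
    ← SimpleGraph.neighborFinset_eq_filter, ← Finset.sum_div]
  ring

theorem lazyAbsorbed_mulVec_nonneg {x : V → ℝ} (hx : 0 ≤ x) : 0 ≤ lazyAbsorbed G B *ᵥ x :=
  fun u => by
    rw [Pi.zero_apply, lazyAbsorbed_mulVec_apply]
    split_ifs
    · rfl
    · exact div_nonneg (add_nonneg (hx u) (div_nonneg (Finset.sum_nonneg fun v _ => hx v)
        (Nat.cast_nonneg _))) zero_le_two

theorem lazyAbsorbed_mulVec_of_mem (x : V → ℝ) {u : V} (hu : u ∈ B) :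
    (lazyAbsorbed G B *ᵥ x) u = 0 := by
  rw [lazyAbsorbed_mulVec_apply, if_pos hu]

theorem lazyAbsorbed_mulVec_one_le (u : V) : (lazyAbsorbed G B *ᵥ fun _ => 1) u ≤ 1 := by
  rw [lazyAbsorbed_mulVec_apply]
  split_ifs
  · exact zero_le_one
  · rw [Finset.sum_const, nsmul_one, SimpleGraph.card_neighborFinset_eq_degree]
    have : (G.degree u : ℝ) / G.degree u ≤ 1 := div_self_le_one _
    linarith

theorem degree_mul_lazyAbsorbed_mulVec_sq_le {g : V → ℝ} (hgB : ∀ u ∈ B, g u = 0) (u : V) :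
    G.degree u * (lazyAbsorbed G B *ᵥ g) u ^ 2 ≤ (G.degree u * g u ^ 2
      + 2 * ∑ v ∈ G.neighborFinset u, g u * g v
      + ∑ v ∈ G.neighborFinset u, g v ^ 2) / 4 := by
  rw [lazyAbsorbed_mulVec_apply, ← Finset.mul_sum]
  split_ifs with hu
  · have := Finset.sum_nonneg fun v (_ : v ∈ G.neighborFinset u) => sq_nonneg (g v)
    simp only [hgB u hu]
    linarith
  set S := ∑ v ∈ G.neighborFinset u, g v
  rcases (Nat.zero_le (G.degree u)).eq_or_lt with hdeg | hdeg
  · simp [← hdeg, S, Finset.card_eq_zero.1 hdeg.symm]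
  have hCS : S ^ 2 ≤ G.degree u * ∑ v ∈ G.neighborFinset u, g v ^ 2 := by
    simpa using sq_sum_le_card_mul_sum_sq (s := G.neighborFinset u) (f := g)
  have hdegR : (0 : ℝ) < G.degree u := by exact_mod_cast hdeg
  have : G.degree u * ((g u + S / G.degree u) / 2) ^ 2
      = (G.degree u * g u ^ 2 + 2 * (g u * S) + S ^ 2 / G.degree u) / 4 := by
    field_simp
    ring
  rw [this]
  gcongr
  rwa [div_le_iff₀' hdegR]

theorem degNormSq_lazyAbsorbed_mulVec_le {g : V → ℝ} (hgB : ∀ u ∈ B, g u = 0) :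
    degNormSq G (lazyAbsorbed G B *ᵥ g) ≤ degNormSq G g - dirichletSum G g / 4 := by
  calc degNormSq G (lazyAbsorbed G B *ᵥ g)
      ≤ ∑ u, (G.degree u * g u ^ 2 + 2 * ∑ v ∈ G.neighborFinset u, g u * g v
          + ∑ v ∈ G.neighborFinset u, g v ^ 2) / 4 :=
        Finset.sum_le_sum fun u _ => degree_mul_lazyAbsorbed_mulVec_sq_le G B hgB u
    _ = degNormSq G g - dirichletSum G g / 4 := by
        rw [← Finset.sum_div, Finset.sum_add_distrib, Finset.sum_add_distrib, ← Finset.mul_sum,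
          sum_neighborFinset_sq_right, dirichletSum_eq]
        simp only [degNormSq]
        ring

end LazyWalk

section Escape

variable {V : Type*} [Fintype V] (G : SimpleGraph V) {A B : Set V} {δ : ℝ} {d : ℕ}

theorem degree_pos_of_expansion (hδ : 0 < δ)
    (hexp : ∀ A' ⊆ A, A'.Nonempty →
      δ * (A'.ncard : ℝ) ≤ ((edgeBoundary G A').ncard : ℝ))
    {v : V} (hv : v ∈ A) : 0 < G.degree v := by
  by_contra! h0
  have hempty : edgeBoundary G {v} = ∅ := by
    refine Set.eq_empty_of_forall_notMem ?_
    rintro _ ⟨he, u, w, rfl, rfl, -⟩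
    have : w ∈ G.neighborFinset u := by simpa using he
    rw [Finset.card_eq_zero.1 (Nat.le_zero.1 h0)] at this
    exact Finset.notMem_empty w this
  have := hexp {v} (Set.singleton_subset_iff.2 hv) (Set.singleton_nonempty v)
  simp only [Set.ncard_singleton, Nat.cast_one, mul_one, hempty, Set.ncard_empty,
    Nat.cast_zero] at this
  linarith

theorem sq_le_degNormSq {v : V} (hv : 0 < G.degree v) (g : V → ℝ) :
    g v ^ 2 ≤ degNormSq G g :=
  calc g v ^ 2 ≤ G.degree v * g v ^ 2 :=
        le_mul_of_one_le_left (sq_nonneg _) (by exact_mod_cast hv)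
    _ ≤ degNormSq G g :=
        Finset.single_le_sum (f := fun u => (G.degree u : ℝ) * g u ^ 2)
          (fun u _ => by positivity) (Finset.mem_univ v)

theorem degNormSq_le_mul_card (hdeg : ∀ v ∈ A, G.degree v ≤ d) {x : V → ℝ}
    (hxA : Function.support x ⊆ A) (hx : ∀ u, |x u| ≤ 1) :
    degNormSq G x ≤ d * Fintype.card V := by
  calc degNormSq G x ≤ ∑ _u : V, (d : ℝ) := Finset.sum_le_sum fun u _ => ?_
    _ = d * Fintype.card V := by simp [mul_comm]
  by_cases hu : x u = 0
  · simp [hu]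
  · have hd : (G.degree u : ℝ) ≤ d := by exact_mod_cast hdeg u (hxA hu)
    have hx1 : x u ^ 2 ≤ 1 := (sq_le_one_iff_abs_le_one _).2 (hx u)
    nlinarith [sq_nonneg (x u)]

theorem degNormSq_lazyAbsorbed_mulVec_le_mul (hδ : 0 ≤ δ)
    (hexp : ∀ A' ⊆ A, A'.Nonempty →
      δ * (A'.ncard : ℝ) ≤ ((edgeBoundary G A').ncard : ℝ))
    (hdeg : ∀ v ∈ A, G.degree v ≤ d) {g : V → ℝ} (hg0 : 0 ≤ g)
    (hgA : Function.support g ⊆ A) (hgB : ∀ u ∈ B, g u = 0) :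
    degNormSq G (lazyAbsorbed G B *ᵥ g) ≤ (1 - δ ^ 2 / (4 * d ^ 2)) * degNormSq G g := by
  have hcheeger := sq_mul_degNormSq_le_dirichletSum G hδ hexp hdeg hg0 hgA
  have hgap : δ ^ 2 / (4 * d ^ 2) * degNormSq G g ≤ dirichletSum G g / 4 := by
    rcases eq_or_ne (d : ℝ) 0 with hd | hd
    · rw [hd, zero_pow two_ne_zero, mul_zero, div_zero, zero_mul]
      exact div_nonneg (dirichletSum_nonneg G g) zero_le_four
    · rw [div_mul_eq_mul_div, div_le_div_iff₀ (by positivity) (by norm_num)]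
      nlinarith
  linarith [degNormSq_lazyAbsorbed_mulVec_le G B hgB]

theorem degNormSq_lazyAbsorbed_pow_mulVec_le [DecidableEq V] (hunion : A ∪ B = Set.univ)
    (hδ : 0 ≤ δ) (hδd : δ ≤ 2 * d)
    (hexp : ∀ A' ⊆ A, A'.Nonempty →
      δ * (A'.ncard : ℝ) ≤ ((edgeBoundary G A').ncard : ℝ))
    (hdeg : ∀ v ∈ A, G.degree v ≤ d) {g : V → ℝ} (hg0 : 0 ≤ g)
    (hgB : ∀ u ∈ B, g u = 0) (t : ℕ) :
    degNormSq G (lazyAbsorbed G B ^ t *ᵥ g)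
      ≤ (1 - δ ^ 2 / (4 * d ^ 2)) ^ t * degNormSq G g := by
  have hinv : ∀ k, 0 ≤ lazyAbsorbed G B ^ k *ᵥ g ∧
      ∀ u ∈ B, (lazyAbsorbed G B ^ k *ᵥ g) u = 0 := by
    intro k
    induction k with
    | zero => simpa using ⟨hg0, hgB⟩
    | succ k ih =>
      rw [pow_succ', ← mulVec_mulVec]
      exact ⟨lazyAbsorbed_mulVec_nonneg G B ih.1,
        fun u hu => lazyAbsorbed_mulVec_of_mem G B _ hu⟩
  have hr : δ ^ 2 / (4 * d ^ 2) ≤ 1 := div_le_one_of_le₀ (by nlinarith) (by positivity)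
  have := le_geom (u := fun k => degNormSq G (lazyAbsorbed G B ^ k *ᵥ g))
    (c := 1 - δ ^ 2 / (4 * d ^ 2)) (by linarith) t fun k _ => by
      simp only [pow_succ' (lazyAbsorbed G B) k, ← mulVec_mulVec]
      exact degNormSq_lazyAbsorbed_mulVec_le_mul G hδ hexp hdeg (hinv k).1
        (support_subset_of_union_eq_univ hunion (hinv k).2) (hinv k).2
  rwa [pow_zero, one_mulVec] at this

/-- The first step is split off because `𝟙` does not vanish on `B`, where degrees are not
bounded by `d`. -/
theorem degNormSq_lazyAbsorbed_pow_succ_mulVec_one_le [DecidableEq V]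
    (hunion : A ∪ B = Set.univ) (hδ : 0 ≤ δ) (hδd : δ ≤ 2 * d)
    (hexp : ∀ A' ⊆ A, A'.Nonempty →
      δ * (A'.ncard : ℝ) ≤ ((edgeBoundary G A').ncard : ℝ))
    (hdeg : ∀ v ∈ A, G.degree v ≤ d) (t : ℕ) :
    degNormSq G (lazyAbsorbed G B ^ (t + 1) *ᵥ fun _ => 1)
      ≤ (1 - δ ^ 2 / (4 * d ^ 2)) ^ t * (d * Fintype.card V) := by
  rw [pow_succ, ← mulVec_mulVec]
  set x := lazyAbsorbed G B *ᵥ fun _ => (1 : ℝ)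
  have hx0 : 0 ≤ x := lazyAbsorbed_mulVec_nonneg G B fun _ => zero_le_one
  have hxB : ∀ u ∈ B, x u = 0 := fun u hu => lazyAbsorbed_mulVec_of_mem G B _ hu
  have hr : δ ^ 2 / (4 * d ^ 2) ≤ 1 := div_le_one_of_le₀ (by nlinarith) (by positivity)
  calc _ ≤ (1 - δ ^ 2 / (4 * d ^ 2)) ^ t * degNormSq G x :=
        degNormSq_lazyAbsorbed_pow_mulVec_le G hunion hδ hδd hexp hdeg hx0 hxB t
    _ ≤ _ := by
      have := sub_nonneg.2 hr
      gcongr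
      exact degNormSq_le_mul_card G hdeg (support_subset_of_union_eq_univ hunion hxB)
        fun u => abs_le.2 ⟨(hx0 u).trans' (by norm_num), lazyAbsorbed_mulVec_one_le G B u⟩

end Escape

theorem log_le_of_mixing_time {d n δ T : ℝ} (hd : 1 ≤ d) (hn : 1 ≤ n) (hδ0 : 0 < δ)
    (hδ : δ < 1 / 2) (hT : 16 * d ^ 2 / δ ^ 2 * (Real.log n + Real.log (2 * d / δ)) ≤ T) :
    Real.log (2 * d * n) ≤ δ ^ 2 / (4 * d ^ 2) * (T - 1) := by
  have hc : δ ^ 2 / (4 * d ^ 2) ≤ 1 / 16 := by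
    rw [div_le_iff₀ (by positivity)]; nlinarith
  have hcT : 4 * (Real.log n + Real.log (2 * d / δ)) ≤ δ ^ 2 / (4 * d ^ 2) * T := by
    have : δ ^ 2 / (4 * d ^ 2) * (16 * d ^ 2 / δ ^ 2) = 4 := by field_simp; ring
    calc 4 * (Real.log n + Real.log (2 * d / δ))
        = δ ^ 2 / (4 * d ^ 2) * (16 * d ^ 2 / δ ^ 2 * (Real.log n + Real.log (2 * d / δ))) := by
          rw [← mul_assoc, this]
      _ ≤ δ ^ 2 / (4 * d ^ 2) * T := by gcongr
  have hδlog : Real.log 2 ≤ -Real.log δ := by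
    rw [← Real.log_inv]
    exact Real.log_le_log (by norm_num) (by rw [le_inv_comm₀] <;> linarith)
  have hlog2d : Real.log (2 * d) = Real.log 2 + Real.log d :=
    Real.log_mul (by norm_num) (by positivity)
  rw [Real.log_div (by positivity) hδ0.ne', hlog2d] at hcT
  rw [Real.log_mul (by positivity) (by positivity), hlog2d]
  have := Real.log_nonneg hd
  have := Real.log_nonneg hn
  have := Real.log_two_gt_d9
  nlinarith

theorem one_sub_pow_mul_le_half {c x : ℝ} (hc : c ≤ 1) (hx : 0 < x) {t : ℕ}
    (h : Real.log (2 * x) ≤ c * t) : (1 - c) ^ t * x ≤ 1 / 2 := by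
  have hpow : (1 - c) ^ t ≤ (2 * x)⁻¹ := calc
    (1 - c) ^ t ≤ Real.exp (-c) ^ t :=
      pow_le_pow_left₀ (by linarith) (Real.one_sub_le_exp_neg c) t
    _ = Real.exp (-(c * t)) := by rw [← Real.exp_nat_mul]; ring_nf
    _ ≤ Real.exp (-Real.log (2 * x)) := Real.exp_le_exp.2 (by linarith)
    _ = (2 * x)⁻¹ := by rw [Real.exp_neg, Real.exp_log (by positivity)]
  calc (1 - c) ^ t * x ≤ (2 * x)⁻¹ * x := by gcongr
    _ = 1 / 2 := by field_simp

theorem escaping_time_of_high_conductance_general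
    {V : Type*} [Fintype V] [DecidableEq V]
    (G : SimpleGraph V)
    (A B : Set V) (hunion : A ∪ B = Set.univ)
    (d : ℕ) (hd : 1 ≤ d)
    (hdeg : ∀ v ∈ A, {w | G.Adj v w}.ncard ≤ d)
    (δ : ℝ) (hδ0 : 0 < δ) (hδhalf : δ < 1 / 2)
    (hexp : ∀ A' ⊆ A, A'.Nonempty →
      δ * (A'.ncard : ℝ) ≤ ((edgeBoundary G A').ncard : ℝ))
    (T : ℕ)
    (hT : (16 * (d : ℝ) ^ 2 / δ ^ 2) *
        (Real.log (Fintype.card V) + Real.log (2 * d / δ)) ≤ (T : ℝ)) :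
    ∀ v ∈ A,
      δ / (4 * d) ≤ 1 - ((lazyAbsorbed G B ^ T).mulVec (fun _ => (1 : ℝ))) v := by
  intro v hv
  have hdeg' : ∀ u ∈ A, G.degree u ≤ d := fun u hu => ncard_setOf_adj G u ▸ hdeg u hu
  have hd1 : (1 : ℝ) ≤ d := by exact_mod_cast hd
  have hn : (1 : ℝ) ≤ Fintype.card V := by exact_mod_cast Fintype.card_pos_iff.2 ⟨v⟩
  have hc : 0 < δ ^ 2 / (4 * d ^ 2) := by positivity
  have hc1 : δ ^ 2 / (4 * d ^ 2) ≤ 1 := by rw [div_le_one (by positivity)]; nlinarith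
  have hlog := log_le_of_mixing_time hd1 hn hδ0 hδhalf hT
  have hlog2 : 0 < Real.log (2 * d * Fintype.card V) := Real.log_pos (by nlinarith)
  obtain ⟨t, rfl⟩ : ∃ t, T = t + 1 :=
    Nat.exists_eq_add_one.2 (by exact_mod_cast (by nlinarith : (0 : ℝ) < T))
  have hsq : (lazyAbsorbed G B ^ (t + 1) *ᵥ fun _ => 1) v ^ 2 ≤ 1 / 2 := calc
    _ ≤ degNormSq G (lazyAbsorbed G B ^ (t + 1) *ᵥ fun _ => 1) :=
      sq_le_degNormSq G (degree_pos_of_expansion G hδ0 hexp hv) _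
    _ ≤ (1 - δ ^ 2 / (4 * d ^ 2)) ^ t * (d * Fintype.card V) :=
      degNormSq_lazyAbsorbed_pow_succ_mulVec_one_le G hunion hδ0.le (by linarith) hexp hdeg' t
    _ ≤ 1 / 2 := one_sub_pow_mul_le_half hc1 (by positivity) (by simpa [mul_assoc] using hlog)
  have : δ / (4 * d) ≤ 1 / 8 := by rw [div_le_iff₀ (by positivity)]; nlinarith
  nlinarith

/-- Escaping time of a high-conductance subset: in a finite simple connected
graph `G` with vertex set partitioned as `A ∪ B` (`B` nonempty), where every
vertex of `A` has degree at most `d ≥ 1` and every nonempty `A' ⊆ A` satisfies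
`|∂_G(A')| ≥ δ|A'|` for some `0 < δ < 1/2`, a `T`-step lazy random walk with
`T ≥ (16 d²/δ²)(ln |V| + ln (2d/δ))` started at any `v ∈ A` reaches `B` with
probability at least `δ/(4d)`. -/
theorem escaping_time_of_high_conductance
    {V : Type*} [Fintype V] [DecidableEq V]
    (G : SimpleGraph V) (hconn : G.Connected)
    (A B : Set V) (hunion : A ∪ B = Set.univ) (hdisj : Disjoint A B)
    (hB : B.Nonempty)
    (d : ℕ) (hd : 1 ≤ d)
    (hdeg : ∀ v ∈ A, {w | G.Adj v w}.ncard ≤ d)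
    (δ : ℝ) (hδ0 : 0 < δ) (hδhalf : δ < 1 / 2)
    (hexp : ∀ A' ⊆ A, A'.Nonempty →
      δ * (A'.ncard : ℝ) ≤ ((edgeBoundary G A').ncard : ℝ))
    (T : ℕ)
    (hT : (16 * (d : ℝ) ^ 2 / δ ^ 2) *
        (Real.log (Fintype.card V) + Real.log (2 * d / δ)) ≤ (T : ℝ)) :
    ∀ v ∈ A,
      δ / (4 * d) ≤ 1 - ((lazyAbsorbed G B ^ T).mulVec (fun _ => (1 : ℝ))) v :=
  escaping_time_of_high_conductance_general G A B hunion d hd hdeg δ hδ0 hδhalf hexp T hT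
end
end

section
/- Let G = (V = A ∪ B, E) be a finite simple undirected connected graph with B nonempty, such that d_G(v) ≤ d for every v ∈ A (with d ≥ 1), and such that for some real 0 < δ < 1/2 every nonempty A' ⊆ A satisfies |∂_G(A')| ≥ δ·|A'|. Let G' be the weighted graph obtained by contracting B to a single vertex b*. Then the weighted conductance of G' satisfies φ(G') ≥ δ/d; that is, every nonempty S ⊆ A ∪ {b*} with vol_{G'}(S) ≤ vol_{G'}(A ∪ {b*})/2 satisfies w(∂_{G'}(S)) ≥ (δ/d)·vol_{G'}(S). -/
open scoped Classical

noncomputable section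

/-- Edge weights of the weighted graph `G'` obtained from `G` by contracting
`B` to a single vertex `b*` (represented by `none`); the other vertices are
those of `A`. Edges inside `A` keep weight `1`, and the weight of `{u, b*}` is
the number of `B`-neighbors of `u` in `G`. -/
def cweight {V : Type*} (G : SimpleGraph V) (A B : Set V) :
    Option {v : V // v ∈ A} → Option {v : V // v ∈ A} → ℝ
  | some u, some v => if G.Adj u.1 v.1 then 1 else 0
  | some u, none => (({b | b ∈ B ∧ G.Adj u.1 b}).ncard : ℝ)
  | none, some v => (({b | b ∈ B ∧ G.Adj v.1 b}).ncard : ℝ)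
  | none, none => 0

/-- Total weight `w(∂(S))` of the edge boundary of `S` in a weighted graph
with symmetric weight function `w`. -/
def wBoundary {α : Type*} [Fintype α] (w : α → α → ℝ) (S : Set α) : ℝ :=
  ∑ u, ∑ v, if u ∈ S ∧ v ∉ S then w u v else 0

/-- The volume `vol(S) = Σ_{u ∈ S} Σ_v w(u,v)` of a vertex set in a weighted
graph with symmetric weight function `w`. -/
def wVol {α : Type*} [Fintype α] (w : α → α → ℝ) (S : Set α) : ℝ :=
  ∑ u, ∑ v, if u ∈ S then w u v else 0

/-!
Let `π : V → A ∪ {b*}` send `B = Aᶜ` to `b*`. The weight of `{x, y}` in `G'` counts the edges of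
`G` between the fibres of `x` and `y`, except that the edges inside `B`, which would form a loop at
`b*`, are dropped. A set `S ∌ b*` never sees that loop, so its volume and cut in `G'` are those of
`S' = π⁻¹(S) ⊆ A` in `G`: `vol(S) ≤ d·|S'|` and `w(∂S) = |∂_G(S')| ≥ δ·|S'|`. If `b* ∈ S`, the
complement `Sᶜ ∌ b*` has the same cut and, as `vol(S) ≤ vol(V')/2`, at least the volume of `S`.
-/

theorem Set.natCast_ncard_eq_sum_ite {α : Type*} [Fintype α] (s : Set α) :
    (s.ncard : ℝ) = ∑ x, if x ∈ s then (1 : ℝ) else 0 := by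
  simp [Set.ncard_eq_toFinset_card', Finset.sum_boole]

section WeightedGraph

variable {α β : Type*} [Fintype α] [Fintype β]

theorem wVol_add_wVol_compl (w : α → α → ℝ) (S : Set α) :
    wVol w S + wVol w Sᶜ = wVol w Set.univ := by
  simp only [wVol, ← Finset.sum_add_distrib]
  refine Finset.sum_congr rfl fun u _ => Finset.sum_congr rfl fun v _ => ?_
  by_cases h : u ∈ S <;> simp [h]

theorem wBoundary_compl {w : α → α → ℝ} (hw : ∀ u v, w u v = w v u) (S : Set α) :
    wBoundary w Sᶜ = wBoundary w S := by
  unfold wBoundary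
  rw [Finset.sum_comm]
  refine Finset.sum_congr rfl fun u _ => Finset.sum_congr rfl fun v _ => ?_
  by_cases hu : u ∈ S <;> by_cases hv : v ∈ S <;> simp [hu, hv, hw v u]

theorem le_wBoundary_of_le_wBoundary_compl {w : α → α → ℝ} (hw : ∀ u v, w u v = w v u)
    {c : ℝ} (hc : 0 ≤ c) {S : Set α} (hS : wVol w S ≤ wVol w Set.univ / 2)
    (hSc : c * wVol w Sᶜ ≤ wBoundary w Sᶜ) : c * wVol w S ≤ wBoundary w S := by
  have hle : wVol w S ≤ wVol w Sᶜ := by linarith [wVol_add_wVol_compl w S]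
  calc c * wVol w S ≤ c * wVol w Sᶜ := by gcongr
    _ ≤ wBoundary w Sᶜ := hSc
    _ = wBoundary w S := wBoundary_compl hw S

variable [DecidableEq β]

theorem sum_sum_mul_sum_sum_fiber (f : α → β) (a : α → α → ℝ) (F : β → β → ℝ) :
    ∑ x, ∑ y, F x y * ∑ u with f u = x, ∑ v with f v = y, a u v
      = ∑ u, ∑ v, F (f u) (f v) * a u v := by
  calc _ = ∑ x, ∑ y, ∑ u with f u = x, ∑ v with f v = y, F (f u) (f v) * a u v := by
        refine Finset.sum_congr rfl fun x _ => Finset.sum_congr rfl fun y _ => ?_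
        rw [Finset.mul_sum]
        refine Finset.sum_congr rfl fun u hu => ?_
        rw [Finset.mul_sum]
        refine Finset.sum_congr rfl fun v hv => ?_
        rw [(Finset.mem_filter.1 hu).2, (Finset.mem_filter.1 hv).2]
    _ = ∑ x, ∑ u with f u = x, ∑ y, ∑ v with f v = y, F (f u) (f v) * a u v :=
        Finset.sum_congr rfl fun _ _ => Finset.sum_comm
    _ = ∑ x, ∑ u with f u = x, ∑ v, F (f u) (f v) * a u v :=
        Finset.sum_congr rfl fun _ _ => Finset.sum_congr rfl fun _ _ => Finset.sum_fiberwise _ _ _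
    _ = _ := Finset.sum_fiberwise _ _ _

variable {f : α → β} {a : α → α → ℝ} {w : β → β → ℝ} {S : Set β}

theorem wVol_eq_wVol_preimage
    (hw : ∀ x ∈ S, ∀ y, w x y = ∑ u with f u = x, ∑ v with f v = y, a u v) :
    wVol w S = wVol a (f ⁻¹' S) := by
  have h := sum_sum_mul_sum_sum_fiber f a fun x _ => if x ∈ S then (1 : ℝ) else 0
  simp only [wVol, Set.mem_preimage, ite_mul, one_mul, zero_mul] at h ⊢
  rw [← h]
  refine Finset.sum_congr rfl fun x _ => Finset.sum_congr rfl fun y _ => ?_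
  split_ifs with hx
  · exact hw x hx y
  · rfl

theorem wBoundary_eq_wBoundary_preimage
    (hw : ∀ x ∈ S, ∀ y, w x y = ∑ u with f u = x, ∑ v with f v = y, a u v) :
    wBoundary w S = wBoundary a (f ⁻¹' S) := by
  have h := sum_sum_mul_sum_sum_fiber f a fun x y => if x ∈ S ∧ y ∉ S then (1 : ℝ) else 0
  simp only [wBoundary, Set.mem_preimage, ite_mul, one_mul, zero_mul] at h ⊢
  rw [← h]
  refine Finset.sum_congr rfl fun x _ => Finset.sum_congr rfl fun y _ => ?_
  split_ifs with hxy
  · exact hw x hxy.1 y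
  · rfl

end WeightedGraph

section Graph

variable {V : Type*} [Fintype V] (G : SimpleGraph V)

theorem wBoundary_adjMatrix (S : Set V) :
    wBoundary (G.adjMatrix ℝ) S = (edgeBoundary G S).ncard := by
  set cut : Set (V × V) := {p | p.1 ∈ S ∧ p.2 ∉ S ∧ G.Adj p.1 p.2}
  have himage : edgeBoundary G S = (fun p : V × V => s(p.1, p.2)) '' cut := by
    ext e
    constructor
    · rintro ⟨he, u, v, rfl, hu, hv⟩
      exact ⟨(u, v), ⟨hu, hv, he⟩, rfl⟩
    · rintro ⟨⟨u, v⟩, ⟨hu, hv, huv⟩, rfl⟩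
      exact ⟨huv, u, v, rfl, hu, hv⟩
  have hinj : Set.InjOn (fun p : V × V => s(p.1, p.2)) cut := by
    rintro ⟨u, v⟩ ⟨hu, -, -⟩ ⟨u', v'⟩ ⟨-, hv', -⟩ huv
    rcases Sym2.eq_iff.1 huv with ⟨rfl, rfl⟩ | ⟨rfl, -⟩
    · rfl
    · exact absurd hu hv'
  rw [himage, hinj.ncard_image, Set.natCast_ncard_eq_sum_ite, Fintype.sum_prod_type]
  refine Finset.sum_congr rfl fun u _ => Finset.sum_congr rfl fun v _ => ?_
  by_cases hu : u ∈ S <;> by_cases hv : v ∈ S <;> simp [cut, hu, hv]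

theorem wVol_adjMatrix_le {S : Set V} {d : ℕ} (hdeg : ∀ v ∈ S, {w | G.Adj v w}.ncard ≤ d) :
    wVol (G.adjMatrix ℝ) S ≤ d * S.ncard := by
  rw [Set.natCast_ncard_eq_sum_ite, Finset.mul_sum]
  refine Finset.sum_le_sum fun v _ => ?_
  by_cases hv : v ∈ S
  · have hrow : ∑ w, G.adjMatrix ℝ v w = {w | G.Adj v w}.ncard := by
      simp [Set.natCast_ncard_eq_sum_ite, SimpleGraph.adjMatrix_apply]
    simp only [hv, if_true, mul_one, hrow]
    exact_mod_cast hdeg v hv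
  · simp [hv]

end Graph

section Contraction

variable {V : Type*} (G : SimpleGraph V) (A : Set V)

theorem cweight_comm (B : Set V) (x y : Option {v : V // v ∈ A}) :
    cweight G A B x y = cweight G A B y x := by
  cases x <;> cases y <;> simp only [cweight, SimpleGraph.adj_comm]

def collapseCompl (v : V) : Option {v : V // v ∈ A} :=
  if h : v ∈ A then some ⟨v, h⟩ else none

variable {A}

theorem collapseCompl_eq_some_iff {v : V} {u : {v : V // v ∈ A}} :
    collapseCompl A v = some u ↔ v = u := by
  unfold collapseCompl
  split_ifs with h
  · simp [Subtype.ext_iff]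
  · simp only [false_iff]
    rintro rfl
    exact h u.2

theorem collapseCompl_eq_none_iff {v : V} : collapseCompl A v = none ↔ v ∉ A := by
  unfold collapseCompl
  split_ifs with h <;> simp [h]

variable [Fintype V]

theorem filter_collapseCompl_eq_some (u : {v : V // v ∈ A}) :
    ({v | collapseCompl A v = some u} : Finset V) = {u.1} := by
  ext v
  simp [collapseCompl_eq_some_iff]

theorem cweight_some_eq_sum_fiber (u : {v : V // v ∈ A}) (y : Option {v : V // v ∈ A}) :
    cweight G A Aᶜ (some u) y
      = ∑ u' with collapseCompl A u' = some u, ∑ v with collapseCompl A v = y,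
          G.adjMatrix ℝ u' v := by
  rw [filter_collapseCompl_eq_some, Finset.sum_singleton]
  cases y with
  | none =>
    rw [cweight, Set.natCast_ncard_eq_sum_ite, Finset.sum_filter]
    refine Finset.sum_congr rfl fun v _ => ?_
    by_cases hv : v ∈ A <;> simp [hv, collapseCompl_eq_none_iff, SimpleGraph.adjMatrix_apply]
  | some v =>
    rw [filter_collapseCompl_eq_some, Finset.sum_singleton, cweight, SimpleGraph.adjMatrix_apply]

theorem le_wBoundary_cweight_of_none_notMem {d : ℕ} (hdeg : ∀ v ∈ A, {w | G.Adj v w}.ncard ≤ d)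
    {δ : ℝ} (hδ : 0 ≤ δ)
    (hexp : ∀ A' ⊆ A, A'.Nonempty → δ * (A'.ncard : ℝ) ≤ ((edgeBoundary G A').ncard : ℝ))
    {S : Set (Option {v : V // v ∈ A})} (hS : none ∉ S) :
    (δ / d) * wVol (cweight G A Aᶜ) S ≤ wBoundary (cweight G A Aᶜ) S := by
  have hw : ∀ x ∈ S, ∀ y, cweight G A Aᶜ x y
      = ∑ u with collapseCompl A u = x, ∑ v with collapseCompl A v = y, G.adjMatrix ℝ u v := by
    rintro (_ | u) hx y
    · exact absurd hx hS
    · exact cweight_some_eq_sum_fiber G u y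
  set S' := collapseCompl A ⁻¹' S
  have hS'A : S' ⊆ A := fun v hv => by
    by_contra hvA
    rw [Set.mem_preimage, collapseCompl_eq_none_iff.2 hvA] at hv
    exact hS hv
  have hexp' : δ * S'.ncard ≤ (edgeBoundary G S').ncard := by
    rcases S'.eq_empty_or_nonempty with h | h
    · simp [h]
    · exact hexp S' hS'A h
  rw [wVol_eq_wVol_preimage hw, wBoundary_eq_wBoundary_preimage hw, wBoundary_adjMatrix]
  calc (δ / d) * wVol (G.adjMatrix ℝ) S' ≤ (δ / d) * (d * S'.ncard) := by
        gcongr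
        exact wVol_adjMatrix_le G fun v hv => hdeg v (hS'A hv)
    _ ≤ δ * S'.ncard := by
        rw [← mul_assoc]
        gcongr
        rcases eq_or_ne (d : ℝ) 0 with hd | hd
        · simp [hd, hδ]
        · rw [div_mul_cancel₀ δ hd]
    _ ≤ _ := hexp'

end Contraction

theorem contracted_graph_conductance_general
    {V : Type*} [Fintype V]
    (G : SimpleGraph V)
    (A B : Set V) (hunion : A ∪ B = Set.univ) (hdisj : Disjoint A B)
    (d : ℕ)
    (hdeg : ∀ v ∈ A, {w | G.Adj v w}.ncard ≤ d)
    (δ : ℝ) (hδ0 : 0 < δ)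
    (hexp : ∀ A' ⊆ A, A'.Nonempty →
      δ * (A'.ncard : ℝ) ≤ ((edgeBoundary G A').ncard : ℝ)) :
    ∀ S : Set (Option {v : V // v ∈ A}), S.Nonempty →
      wVol (cweight G A B) S ≤ wVol (cweight G A B) Set.univ / 2 →
      (δ / d) * wVol (cweight G A B) S ≤ wBoundary (cweight G A B) S := by
  obtain rfl : B = Aᶜ :=
    eq_compl_iff_isCompl.2 ⟨hdisj.symm, codisjoint_iff.2 (by rw [sup_comm]; exact hunion)⟩
  intro S _ hvol
  by_cases hS : none ∈ S
  · refine le_wBoundary_of_le_wBoundary_compl (cweight_comm G A Aᶜ) (by positivity) hvol ?_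
    exact le_wBoundary_cweight_of_none_notMem G hdeg hδ0.le hexp (by simpa using hS)
  · exact le_wBoundary_cweight_of_none_notMem G hdeg hδ0.le hexp hS

/-- Conductance of the contracted graph: if every vertex of `A` has degree at
most `d ≥ 1` in `G` and every nonempty `A' ⊆ A` has `|∂_G(A')| ≥ δ|A'|` for
some `0 < δ < 1/2`, then the weighted graph `G'` obtained by contracting `B`
to `b*` has conductance at least `δ/d`: every nonempty `S ⊆ A ∪ {b*}` with
`vol(S) ≤ vol(A ∪ {b*})/2` satisfies `w(∂_{G'}(S)) ≥ (δ/d)·vol(S)`. -/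
theorem contracted_graph_conductance
    {V : Type*} [Fintype V] [DecidableEq V]
    (G : SimpleGraph V) (hconn : G.Connected)
    (A B : Set V) (hunion : A ∪ B = Set.univ) (hdisj : Disjoint A B)
    (hB : B.Nonempty)
    (d : ℕ) (hd : 1 ≤ d)
    (hdeg : ∀ v ∈ A, {w | G.Adj v w}.ncard ≤ d)
    (δ : ℝ) (hδ0 : 0 < δ) (hδhalf : δ < 1 / 2)
    (hexp : ∀ A' ⊆ A, A'.Nonempty →
      δ * (A'.ncard : ℝ) ≤ ((edgeBoundary G A').ncard : ℝ)) :
    ∀ S : Set (Option {v : V // v ∈ A}), S.Nonempty →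
      wVol (cweight G A B) S ≤ wVol (cweight G A B) Set.univ / 2 →
      (δ / d) * wVol (cweight G A B) S ≤ wBoundary (cweight G A B) S :=
  contracted_graph_conductance_general G A B hunion hdisj d hdeg δ hδ0 hexp
end
end

section
/- Let q ≥ 1 and let H_q be the q-dimensional hypercube graph on vertex set {0,1}^q, where two vertices are adjacent iff they differ in exactly one coordinate. Then the conductance of H_q equals 1/q: for every nonempty S ⊆ {0,1}^q with |S| ≤ 2^{q−1} one has |∂(S)| ≥ |S| (equivalently |∂(S)|/(q·|S|) ≥ 1/q), and there exists a nonempty S ⊆ {0,1}^q with |S| ≤ 2^{q−1} and |∂(S)| = |S|. -/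
open scoped Classical

noncomputable section

/-- The `q`-dimensional hypercube graph on vertex set `{0,1}^q`: two vertices
are adjacent iff they differ in exactly one coordinate. -/
def hypercube (q : ℕ) : SimpleGraph (Fin q → Bool) where
  Adj x y := ∃! i, x i ≠ y i
  symm := by
    constructor
    rintro x y ⟨i, hi, hu⟩
    exact ⟨i, hi.symm, fun j hj => hu j hj.symm⟩
  loopless := by
    constructor
    rintro x ⟨i, hi, -⟩
    exact hi rfl

/-!
Write `splice u v k` for the vector that agrees with `v` on the first `k` coordinates and with
`u` on the others; `k ↦ splice u v k` is the bit-fixing path from `u` to `v`. For `u ∈ S` and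
`v ∉ S` this path leaves `S` along a hypercube edge `(x, y)` in some direction `i`, and `(u, v)`
can be recovered from `(x, y)` together with `splice v u i`, a vector whose `i`-th coordinate is
`y i`. Hence every edge of `∂S` is charged by at most `2^(q-1)` pairs, so
`|S| |Sᶜ| ≤ 2^(q-1) |∂S|`, and `|Sᶜ| ≥ 2^(q-1)` gives `|∂S| ≥ |S|`. Equality holds for a
half-cube `{x | x i = false}`, whose boundary is a perfect matching of it with its complement.
-/

open Finset

lemma card_filter_apply_eq {ι β : Type*} [Fintype ι] [DecidableEq ι] [Fintype β] [DecidableEq β]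
    (i : ι) (b : β) : #{f : ι → β | f i = b} = Fintype.card β ^ (Fintype.card ι - 1) := by
  simpa using Fintype.card_filter_piFinset_const_eq_of_mem (univ : Finset β) i (mem_univ b)

section Splice

variable {α : Type*} {n : ℕ}

def splice (u v : Fin n → α) (k : ℕ) : Fin n → α :=
  fun j => if (j : ℕ) < k then v j else u j

@[simp]
lemma splice_zero (u v : Fin n → α) : splice u v 0 = u := rfl

lemma splice_of_le (u v : Fin n → α) {k : ℕ} (hk : n ≤ k) : splice u v k = v :=
  funext fun j => if_pos (j.2.trans_le hk)

lemma splice_apply_self (u v : Fin n → α) (j : Fin n) : splice u v j j = u j :=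
  if_neg (lt_irrefl _)

lemma splice_succ_apply_self (u v : Fin n → α) (j : Fin n) : splice u v (j + 1) j = v j :=
  if_pos (Nat.lt_succ_self _)

lemma splice_succ_apply_of_ne (u v : Fin n → α) {k : ℕ} {j : Fin n} (hj : (j : ℕ) ≠ k) :
    splice u v (k + 1) j = splice u v k j := by
  simp only [splice]
  split_ifs <;> first | rfl | omega

lemma splice_splice_splice_of_le (u v : Fin n → α) {k l : ℕ} (h : k ≤ l) :
    splice (splice v u k) (splice u v l) l = v :=
  funext fun j => by
    simp only [splice]
    split_ifs <;> first | rfl | omega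

lemma exists_splice_mem_splice_succ_notMem {S : Set (Fin n → α)} {u v : Fin n → α}
    (hu : u ∈ S) (hv : v ∉ S) : ∃ k < n, splice u v k ∈ S ∧ splice u v (k + 1) ∉ S := by
  obtain ⟨k, hk, hk'⟩ := Nat.exists_not_and_succ_of_not_zero_of_exists
    (p := fun k => splice u v k ∉ S) (by simpa using hu) ⟨n, by rwa [splice_of_le u v le_rfl]⟩
  refine ⟨k, lt_of_not_ge fun h => hk ?_, not_not.1 hk, hk'⟩
  rwa [splice_of_le u v h]

lemma card_splice_eq_le [Fintype α] [DecidableEq α] (i : Fin n) (x y : Fin n → α) :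
    #{p : (Fin n → α) × (Fin n → α) | splice p.1 p.2 i = x ∧ splice p.1 p.2 (i + 1) = y} ≤
      Fintype.card α ^ (n - 1) := by
  calc _ ≤ #{w : Fin n → α | w i = y i} := by
        refine card_le_card_of_injOn (fun p => splice p.2 p.1 i) ?_ ?_
        · rintro ⟨u, v⟩ hp
          simp only [coe_filter, Set.mem_ofPred_eq, mem_univ, true_and] at hp ⊢
          rw [← hp.2, splice_apply_self, splice_succ_apply_self]
        · rintro ⟨u, v⟩ hp ⟨u', v'⟩ hp' h
          simp only [coe_filter, Set.mem_ofPred_eq, mem_univ, true_and] at hp hp' h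
          obtain ⟨rfl, rfl⟩ := hp
          refine Prod.ext ((splice_splice_splice_of_le v u (le_refl (i : ℕ))).symm.trans ?_)
            ((splice_splice_splice_of_le u v (Nat.le_succ i)).symm.trans ?_)
          · rw [← hp'.1, h, splice_splice_splice_of_le v' u' (le_refl (i : ℕ))]
          · rw [← hp'.2, h, splice_splice_splice_of_le u' v' (Nat.le_succ i)]
    _ = _ := by rw [card_filter_apply_eq, Fintype.card_fin]

end Splice

section OrientedBoundary

variable {V : Type*} [Fintype V] [DecidableEq V]

def orientedBoundary (G : SimpleGraph V) (S : Finset V) : Finset (V × V) :=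
  {p | G.Adj p.1 p.2 ∧ p.1 ∈ S ∧ p.2 ∉ S}

lemma ncard_edgeBoundary (G : SimpleGraph V) (S : Finset V) :
    (edgeBoundary G S).ncard = #(orientedBoundary G S) := by
  have himage : edgeBoundary G S = (orientedBoundary G S).image (fun p => s(p.1, p.2)) := by
    ext e
    simp only [edgeBoundary, orientedBoundary, coe_image, coe_filter, mem_univ, true_and,
      Set.mem_ofPred_eq, Set.mem_image, Prod.exists, mem_coe]
    constructor
    · rintro ⟨he, u, v, rfl, hu, hv⟩
      exact ⟨u, v, ⟨he, hu, hv⟩, rfl⟩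
    · rintro ⟨u, v, ⟨he, hu, hv⟩, rfl⟩
      exact ⟨he, u, v, rfl, hu, hv⟩
  rw [himage, Set.ncard_coe_finset, card_image_of_injOn]
  rintro ⟨u, v⟩ h ⟨u', v'⟩ h' huv
  simp only [orientedBoundary, coe_filter, mem_univ, true_and, Set.mem_ofPred_eq] at h h'
  rcases Sym2.eq_iff.1 huv with ⟨rfl, rfl⟩ | ⟨rfl, rfl⟩
  · rfl
  · exact absurd h.2.1 h'.2.2

end OrientedBoundary

section Hypercube

variable {q : ℕ}

lemma hypercube_adj_splice {u v : Fin q → Bool} {k : ℕ}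
    (h : splice u v k ≠ splice u v (k + 1)) :
    (hypercube q).Adj (splice u v k) (splice u v (k + 1)) := by
  have eq_k : ∀ j : Fin q, splice u v k j ≠ splice u v (k + 1) j → (j : ℕ) = k :=
    fun j hj => by_contra fun hjk => hj (splice_succ_apply_of_ne u v hjk).symm
  obtain ⟨i, hi⟩ := Function.ne_iff.1 h
  exact ⟨i, hi, fun j hj => Fin.ext ((eq_k j hj).trans (eq_k i hi).symm)⟩

lemma eq_update_of_hypercube_adj {u v : Fin q → Bool} (h : (hypercube q).Adj u v) {i : Fin q}
    (hi : u i ≠ v i) : v = Function.update u i (v i) := by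
  obtain ⟨j, -, hj⟩ := h
  funext l
  rcases eq_or_ne l i with rfl | hl
  · simp
  · rw [Function.update_of_ne hl]
    by_contra hne
    exact hl ((hj l (Ne.symm hne)).trans (hj i hi).symm)

theorem card_mul_card_compl_le (S : Finset (Fin q → Bool)) :
    #S * #Sᶜ ≤ 2 ^ (q - 1) * #(orientedBoundary (hypercube q) S) := by
  have hexit : ∀ p ∈ S ×ˢ Sᶜ, ∃ k, splice p.1 p.2 k ∈ S ∧ splice p.1 p.2 (k + 1) ∉ S := by
    intro p hp
    rw [mem_product, mem_compl, ← mem_coe, ← mem_coe] at hp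
    obtain ⟨k, -, hk⟩ := exists_splice_mem_splice_succ_notMem hp.1 hp.2
    exact ⟨k, hk⟩
  choose! k hkS hkS' using hexit
  rw [← card_product, ← Fintype.card_bool]
  refine card_le_mul_card_image_of_maps_to
    (f := fun p => (splice p.1 p.2 (k p), splice p.1 p.2 (k p + 1))) (fun p hp => ?_) _
    fun e he => ?_
  · have hne : splice p.1 p.2 (k p) ≠ splice p.1 p.2 (k p + 1) :=
      fun h => hkS' p hp (h ▸ hkS p hp)
    simpa [orientedBoundary, hypercube_adj_splice hne] using ⟨hkS p hp, hkS' p hp⟩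
  · obtain ⟨i, hi, -⟩ := (mem_filter.1 he).2.1
    refine (card_le_card fun p hp => ?_).trans (card_splice_eq_le i e.1 e.2)
    obtain ⟨hp, rfl⟩ := mem_filter.1 hp
    have hki : k p = i := by
      by_contra hne
      exact hi (splice_succ_apply_of_ne p.1 p.2 (Ne.symm hne)).symm
    simp [hki]

theorem card_le_card_orientedBoundary (hq : 1 ≤ q) {S : Finset (Fin q → Bool)}
    (hS : #S ≤ 2 ^ (q - 1)) : #S ≤ #(orientedBoundary (hypercube q) S) := by
  have hcompl : 2 ^ (q - 1) ≤ #Sᶜ := by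
    have hhalf : 2 ^ q = 2 * 2 ^ (q - 1) := by rw [← pow_succ', Nat.sub_add_cancel hq]
    rw [card_compl, Fintype.card_fun, Fintype.card_bool, Fintype.card_fin]
    omega
  refine Nat.le_of_mul_le_mul_right ?_ (Nat.two_pow_pos (q - 1))
  calc #S * 2 ^ (q - 1) ≤ #S * #Sᶜ := Nat.mul_le_mul_left _ hcompl
    _ ≤ 2 ^ (q - 1) * #(orientedBoundary (hypercube q) S) := card_mul_card_compl_le S
    _ = _ := mul_comm _ _

lemma card_orientedBoundary_filter_apply_eq_false_le (i : Fin q) :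
    #(orientedBoundary (hypercube q) {x | x i = false}) ≤
      #{x : Fin q → Bool | x i = false} := by
  refine (card_le_card fun p hp => ?_).trans
    (card_image_le (f := fun x => (x, Function.update x i true)))
  simp only [orientedBoundary, mem_filter, mem_univ, true_and, Bool.not_eq_false] at hp
  obtain ⟨hadj, hu, hv⟩ := hp
  have hp2 : p.2 = Function.update p.1 i true := by
    simpa [hv] using eq_update_of_hypercube_adj hadj (i := i) (by simp [hu, hv])
  exact mem_image.2 ⟨p.1, by simpa using hu, by rw [← hp2]⟩

end Hypercube

/-- The conductance of the `q`-dimensional hypercube equals `1/q`: every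
nonempty `S ⊆ {0,1}^q` with `|S| ≤ 2^(q-1)` has `|∂(S)| ≥ |S|` (equivalently
`|∂(S)|/(q|S|) ≥ 1/q`), and some such `S` achieves `|∂(S)| = |S|`. -/
theorem hypercube_conductance (q : ℕ) (hq : 1 ≤ q) :
    (∀ S : Set (Fin q → Bool), S.Nonempty → S.ncard ≤ 2 ^ (q - 1) →
      S.ncard ≤ (edgeBoundary (hypercube q) S).ncard) ∧
    (∃ S : Set (Fin q → Bool), S.Nonempty ∧ S.ncard ≤ 2 ^ (q - 1) ∧
      (edgeBoundary (hypercube q) S).ncard = S.ncard) := by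
  refine ⟨fun S _ hS => ?_, ?_⟩
  · lift S to Finset (Fin q → Bool) using S.toFinite
    rw [Set.ncard_coe_finset] at hS
    rw [Set.ncard_coe_finset, ncard_edgeBoundary]
    exact card_le_card_orientedBoundary hq hS
  · set H : Finset (Fin q → Bool) := {x | x ⟨0, hq⟩ = false}
    have hH : #H = 2 ^ (q - 1) := by simp [H, card_filter_apply_eq]
    refine ⟨H, ⟨fun _ => false, by simp [H]⟩, by rw [Set.ncard_coe_finset, hH], ?_⟩
    rw [Set.ncard_coe_finset, ncard_edgeBoundary]
    exact le_antisymm (card_orientedBoundary_filter_apply_eq_false_le _)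
      (card_le_card_orientedBoundary hq hH.le)
end
end

section
/- Let q ≥ 1 and let S ⊆ {0,1}^q with 1 ≤ |S| ≤ 2^{q−1}. Then the number of elements x ∈ S having a hypercube-neighbor outside S (i.e., some y ∉ S differing from x in exactly one coordinate) is at least |S|/q. -/
/-! Counting edges: splitting the cube along the first coordinate, at least `min |S| (2^q - |S|)`
edges of the hypercube leave `S`, since each slice contributes its own boundary edges by induction
and the edges between the two slices make up for the difference in their sizes. Each vertex of `S`
lies on at most `q` of these edges, so at least `|S| / q` vertices of `S` lie on one when
`|S| ≤ 2^(q-1)`. -/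

open Finset

namespace Hypercube

section

variable {ι : Type*} [DecidableEq ι]

def flipAt (x : ι → Bool) (i : ι) : ι → Bool := Function.update x i (!x i)

theorem existsUnique_ne_iff_eq_flipAt {x y : ι → Bool} :
    (∃! i, x i ≠ y i) ↔ ∃ i, y = flipAt x i := by
  constructor
  · rintro ⟨i, hi, huniq⟩
    refine ⟨i, funext fun j => ?_⟩
    by_cases hj : j = i
    · subst hj
      simpa [flipAt, Bool.eq_not_iff, eq_comm] using hi
    · simpa [flipAt, hj, eq_comm] using mt (huniq j) hj
  · rintro ⟨i, rfl⟩
    refine ⟨i, by simp [flipAt], fun j hj => ?_⟩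
    by_contra hji
    simp [flipAt, hji] at hj

end

variable {q : ℕ}

theorem flipAt_cons_zero (b : Bool) (f : Fin q → Bool) :
    flipAt (Fin.cons b f : Fin (q + 1) → Bool) 0 = Fin.cons (!b) f := by
  simp [flipAt, Fin.update_cons_zero]

theorem flipAt_cons_succ (b : Bool) (f : Fin q → Bool) (j : Fin q) :
    flipAt (Fin.cons b f : Fin (q + 1) → Bool) j.succ = Fin.cons b (flipAt f j) := by
  simp [flipAt, ← Fin.cons_update]

def edgeBoundaryCard (S : Finset (Fin q → Bool)) : ℕ :=
  ∑ x ∈ S, #{i | flipAt x i ∉ S}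

def slice (S : Finset (Fin (q + 1) → Bool)) (b : Bool) : Finset (Fin q → Bool) :=
  {f | Fin.cons b f ∈ S}

@[simp]
theorem mem_slice {S : Finset (Fin (q + 1) → Bool)} {b : Bool} {f : Fin q → Bool} :
    f ∈ slice S b ↔ Fin.cons b f ∈ S := by
  simp [slice]

theorem sum_eq_sum_slice {M : Type*} [AddCommMonoid M] (S : Finset (Fin (q + 1) → Bool))
    (g : (Fin (q + 1) → Bool) → M) :
    ∑ x ∈ S, g x = ∑ b, ∑ f ∈ slice S b, g (Fin.cons b f) := by
  calc ∑ x ∈ S, g x = ∑ x, if x ∈ S then g x else 0 := (Fintype.sum_ite_mem S g).symm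
    _ = ∑ p : Bool × (Fin q → Bool), if Fin.cons p.1 p.2 ∈ S then g (Fin.cons p.1 p.2) else 0 :=
      ((Fin.consEquiv _).sum_comp fun x => if x ∈ S then g x else 0).symm
    _ = ∑ b, ∑ f ∈ slice S b, g (Fin.cons b f) := by
      simp only [Fintype.sum_prod_type, slice, sum_filter]

theorem card_eq_sum_card_slice (S : Finset (Fin (q + 1) → Bool)) :
    #S = ∑ b, #(slice S b) := by
  simpa only [card_eq_sum_ones] using sum_eq_sum_slice S (fun _ => 1)

theorem card_flipAt_cons_notMem (S : Finset (Fin (q + 1) → Bool)) (b : Bool) (f : Fin q → Bool) :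
    #{i | flipAt (Fin.cons b f) i ∉ S} =
      (if f ∈ slice S (!b) then 0 else 1) + #{j | flipAt f j ∉ slice S b} := by
  rw [Fin.card_filter_univ_succ', flipAt_cons_zero]
  simp only [flipAt_cons_succ, mem_slice, ite_not]

theorem edgeBoundaryCard_eq_sum_slice (S : Finset (Fin (q + 1) → Bool)) :
    edgeBoundaryCard S =
      ∑ b, (#(slice S b \ slice S (!b)) + edgeBoundaryCard (slice S b)) := by
  rw [edgeBoundaryCard, sum_eq_sum_slice]
  refine Fintype.sum_congr _ _ fun b => ?_
  rw [edgeBoundaryCard, sdiff_eq_filter, card_filter]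
  simp only [card_flipAt_cons_notMem, sum_add_distrib, ite_not]

theorem min_card_le_edgeBoundaryCard :
    ∀ {q : ℕ} (S : Finset (Fin q → Bool)), min #S (2 ^ q - #S) ≤ edgeBoundaryCard S
  | 0, S => by
    have := card_le_univ S
    simp only [Fintype.card_unique] at this
    omega
  | q + 1, S => by
    set A := slice S false
    set B := slice S true
    have hcard : #S = #B + #A := by
      simpa only [Fintype.sum_bool] using card_eq_sum_card_slice S
    have hedge : edgeBoundaryCard S =
        #(B \ A) + edgeBoundaryCard B + (#(A \ B) + edgeBoundaryCard A) := by
      simpa only [Fintype.sum_bool, Bool.not_true, Bool.not_false] using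
        edgeBoundaryCard_eq_sum_slice S
    have hAB := le_card_sdiff B A
    have hBA := le_card_sdiff A B
    have ihA := min_card_le_edgeBoundaryCard A
    have ihB := min_card_le_edgeBoundaryCard B
    have hA : #A ≤ 2 ^ q := by simpa using card_le_univ A
    have hB : #B ≤ 2 ^ q := by simpa using card_le_univ B
    rw [pow_succ]
    omega

def innerBoundary (S : Finset (Fin q → Bool)) : Finset (Fin q → Bool) :=
  {x ∈ S | ∃ i, flipAt x i ∉ S}

theorem edgeBoundaryCard_le_mul_card_innerBoundary (S : Finset (Fin q → Bool)) :
    edgeBoundaryCard S ≤ q * #(innerBoundary S) := by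
  rw [edgeBoundaryCard, ← sum_filter_of_ne (p := fun x => ∃ i, flipAt x i ∉ S), mul_comm]
  · refine sum_le_card_nsmul _ _ _ fun x _ => ?_
    simpa using card_le_univ {i | flipAt x i ∉ S}
  · intro x _ hx
    simpa [filter_nonempty_iff, card_ne_zero] using hx

end Hypercube

open Hypercube in
theorem hypercube_boundary_vertices_general (q : ℕ) (hq : 1 ≤ q)
    (S : Set (Fin q → Bool)) (hcard : S.ncard ≤ 2 ^ (q - 1)) :
    (S.ncard : ℝ) / q ≤
      (({x | x ∈ S ∧ ∃ y ∉ S, ∃! i, x i ≠ y i}).ncard : ℝ) := by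
  classical
  set T := S.toFinset
  have hvert : {x | x ∈ S ∧ ∃ y ∉ S, ∃! i, x i ≠ y i} = ↑(innerBoundary T) := by
    ext x
    simp [T, innerBoundary, existsUnique_ne_iff_eq_flipAt]
  have hT : #T ≤ 2 ^ q - #T := by
    have : 2 ^ q = 2 * 2 ^ (q - 1) := by rw [← pow_succ']; congr 1; omega
    have : #T = S.ncard := (Set.ncard_eq_toFinset_card' S).symm
    omega
  have key := (min_card_le_edgeBoundaryCard T).trans (edgeBoundaryCard_le_mul_card_innerBoundary T)
  rw [min_eq_left hT] at key
  rw [hvert, Set.ncard_coe_finset, Set.ncard_eq_toFinset_card' S, div_le_iff₀ (by positivity),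
    mul_comm]
  exact_mod_cast key

/-- If `S ⊆ {0,1}^q` is nonempty with `|S| ≤ 2^(q-1)`, then the number of
elements of `S` having a hypercube-neighbor outside `S` (some `y ∉ S`
differing in exactly one coordinate) is at least `|S|/q`. -/
theorem hypercube_boundary_vertices (q : ℕ) (hq : 1 ≤ q)
    (S : Set (Fin q → Bool)) (hS : S.Nonempty) (hcard : S.ncard ≤ 2 ^ (q - 1)) :
    (S.ncard : ℝ) / q ≤
      (({x | x ∈ S ∧ ∃ y ∉ S, ∃! i, x i ≠ y i}).ncard : ℝ) :=
  hypercube_boundary_vertices_general q hq S hcard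
end

section
/- Consider a reversible circuit with gates G_1,…,G_T on w = p+a+q bits and its associated SetCSP instance 𝒞_x on s = T+w bit strings, and let G_{𝒞_x} be the graph whose vertices are {0,1}^s with an edge between two strings whenever they are C-neighbors for some set-constraint C of 𝒞_x. Then for every y ∈ {0,1}^p, the subgraph of G_{𝒞_x} induced on R_y = { 0^T ‖ y ‖ 0^a ‖ r : r ∈ {0,1}^q } is isomorphic to the q-dimensional hypercube: two vertices of R_y are adjacent in G_{𝒞_x} if and only if their random registers differ in exactly one bit. -/
/-- A set-constraint on `n`-bit strings: a set `J` of bit positions together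
with a collection `Y` of sets of assignments to the bits in `J`. -/
structure SetConstraint (n : ℕ) where
  /-- The bits on which the set-constraint acts. -/
  J : Finset (Fin n)
  /-- The collection `{Y_1, …, Y_ℓ}` of sets of allowed local assignments. -/
  Y : Finset (Finset ({i // i ∈ J} → Bool))

namespace SetConstraint

variable {n : ℕ}

/-- The restriction `x|_{J(C)}` of a string to the bits of the constraint. -/
def res (C : SetConstraint n) (x : Fin n → Bool) : {i // i ∈ C.J} → Bool :=
  fun i => x i.1

/-- The sets in `Y(C)` are pairwise disjoint. -/
def PairwiseDisjointY (C : SetConstraint n) : Prop :=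
  ∀ Y₁ ∈ C.Y, ∀ Y₂ ∈ C.Y, Y₁ ≠ Y₂ → Disjoint Y₁ Y₂

/-- `x` is `C`-bad if `x|_{J(C)}` lies in no set of `Y(C)`. -/
def Bad (C : SetConstraint n) (x : Fin n → Bool) : Prop :=
  ∀ Yi ∈ C.Y, C.res x ∉ Yi

/-- Two distinct strings are `C`-neighbors if they agree outside `J(C)` and
their restrictions to `J(C)` lie in one and the same set of `Y(C)`. -/
def Neighbors (C : SetConstraint n) (x y : Fin n → Bool) : Prop :=
  x ≠ y ∧ (∀ j, j ∉ C.J → x j = y j) ∧ ∃ Yi ∈ C.Y, C.res x ∈ Yi ∧ C.res y ∈ Yi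

/-- `x` is `C`-longing with respect to `S` if `x ∈ S` and `x` is a
`C`-neighbor of some string outside `S`. -/
def Longing (C : SetConstraint n) (S : Set (Fin n → Bool)) (x : Fin n → Bool) : Prop :=
  x ∈ S ∧ ∃ y, y ∉ S ∧ C.Neighbors x y

/-- The set `B_C` of `C`-bad strings in `S`. -/
def badSet (C : SetConstraint n) (S : Set (Fin n → Bool)) : Set (Fin n → Bool) :=
  {x | x ∈ S ∧ C.Bad x}

/-- The set `L_C` of `C`-longing strings in `S`. -/
def longSet (C : SetConstraint n) (S : Set (Fin n → Bool)) : Set (Fin n → Bool) :=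
  {x | C.Longing S x}

/-- `set-unsat(C,S) = (|B_C| + |L_C|)/|S|`. -/
noncomputable def setUnsat (C : SetConstraint n) (S : Set (Fin n → Bool)) : ℝ :=
  (((C.badSet S).ncard : ℝ) + ((C.longSet S).ncard : ℝ)) / (S.ncard : ℝ)

/-- `S` satisfies `C`: every restriction lies in some set of `Y(C)`, and `S`
is closed under replacing the restriction by another string of the same set. -/
def Satisfies (C : SetConstraint n) (S : Set (Fin n → Bool)) : Prop :=
  (∀ x ∈ S, ∃ Yi ∈ C.Y, C.res x ∈ Yi) ∧
  (∀ x ∈ S, ∀ Yi ∈ C.Y, C.res x ∈ Yi → ∀ y,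
    (∀ j, j ∉ C.J → x j = y j) → C.res y ∈ Yi → y ∈ S)

end SetConstraint

/-- `set-unsat(𝒞,S)`: the average of `set-unsat(C_i,S)` over the constraints. -/
noncomputable def setUnsatFam {n m : ℕ} (𝒞 : Fin m → SetConstraint n)
    (S : Set (Fin n → Bool)) : ℝ :=
  (1 / (m : ℝ)) * ∑ i, (𝒞 i).setUnsat S

/-- `set-unsat` of a list of set-constraints: the average of the
`set-unsat` values of its members. -/
noncomputable def setUnsatList {n : ℕ} (L : List (SetConstraint n))
    (S : Set (Fin n → Bool)) : ℝ :=
  (1 / (L.length : ℝ)) * (L.map (fun C => C.setUnsat S)).sum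

/-- A reversible gate on `w` bits: a NOT, CNOT or CCNOT gate applied to
specified (distinct) bit positions. -/
inductive Gate (w : ℕ) where
  | not (i : Fin w) : Gate w
  | cnot (i j : Fin w) (hij : i ≠ j) : Gate w
  | ccnot (i j k : Fin w) (hij : i ≠ j) (hik : i ≠ k) (hjk : j ≠ k) : Gate w

/-- The action of a gate on a `w`-bit string: it acts on its designated bits
and leaves the rest unchanged. -/
def Gate.apply {w : ℕ} : Gate w → (Fin w → Bool) → (Fin w → Bool)
  | .not i, x => Function.update x i (!x i)
  | .cnot i j _, x => Function.update x j (xor (x i) (x j))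
  | .ccnot i j k _ _ _, x => Function.update x k (xor (x i && x j) (x k))

/-- The set of bit positions on which a gate acts. -/
def Gate.support {w : ℕ} : Gate w → Finset (Fin w)
  | .not i => {i}
  | .cnot i j _ => {i, j}
  | .ccnot i j k _ _ _ => {i, j, k}

/-- `runCircuit Gs t x = (G_t ∘ ⋯ ∘ G_1) x`: the snapshot of the computation
after the first `t` gates have been applied to `x`. -/
def runCircuit {w T : ℕ} (Gs : Fin T → Gate w) : ℕ → (Fin w → Bool) → (Fin w → Bool)
  | 0, x => x
  | t + 1, x =>
      if h : t < T then (Gs ⟨t, h⟩).apply (runCircuit Gs t x)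
      else runCircuit Gs t x

/-- The initial work-register string `y ‖ 0^a ‖ r`. -/
def initString (p a q : ℕ) (y : Fin p → Bool) (r : Fin q → Bool) :
    Fin (p + a + q) → Bool :=
  fun i =>
    if h : (i : ℕ) < p then y ⟨i, h⟩
    else if h2 : (i : ℕ) < p + a then false
    else r ⟨(i : ℕ) - (p + a), by have := i.isLt; omega⟩

/-- The full `s = T + w` bit string `unary(τ) ‖ z`: clock register equal to
`unary(τ)` and work register equal to `z`. -/
def snapshot (p a q T : ℕ) (τ : ℕ) (z : Fin (p + a + q) → Bool) :
    Fin (T + (p + a + q)) → Bool :=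
  fun i =>
    if h : (i : ℕ) < T then decide ((i : ℕ) < τ)
    else z ⟨(i : ℕ) - T, by have := i.isLt; omega⟩

/-- Restriction of a full string to the bits in `J`. -/
def restr {n : ℕ} (J : Finset (Fin n)) (x : Fin n → Bool) :
    {i // i ∈ J} → Bool :=
  fun i => x i.1

/-- The assignment on a two-element index set `{i1, i2}` taking value `b1` at
`i1` and `b2` at `i2`. -/
def pat2 {n : ℕ} (i1 i2 : Fin n) (b1 b2 : Bool) :
    {i // i ∈ ({i1, i2} : Finset (Fin n))} → Bool :=
  fun i => if i.1 = i1 then b1 else b2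


/-- Convenience constructor for a set-constraint acting on the two bits
`i1, i2`; each group of pairs `(b1, b2)` of allowed values (value `b1` at
`i1`, value `b2` at `i2`) becomes one set of the collection `Y`. -/
def mk2 {n : ℕ} (i1 i2 : Fin n) (groups : Finset (Finset (Bool × Bool))) :
    SetConstraint n :=
  ⟨{i1, i2}, groups.image (fun g => g.image (fun bb => pat2 i1 i2 bb.1 bb.2))⟩

/-- The clock constraint at position `t`: acts on clock bits `t, t+1` with
allowed collection `{{00},{10},{11}}`. -/
def clockC (p a q T : ℕ) (t : Fin (T - 1)) : SetConstraint (T + (p + a + q)) :=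
  let i1 : Fin (T + (p + a + q)) := ⟨t, by have := t.isLt; omega⟩
  let i2 : Fin (T + (p + a + q)) := ⟨(t : ℕ) + 1, by have := t.isLt; omega⟩
  mk2 i1 i2 {{(false, false)}, {(true, false)}, {(true, true)}}

/-- The auxiliary-bit constraint for auxiliary bit `j`: acts on clock bit `0`
and work bit `p + j`, with allowed collection `{{00},{10},{11}}`. -/
def auxC (p a q T : ℕ) (hT : 0 < T) (j : Fin a) : SetConstraint (T + (p + a + q)) :=
  let i1 : Fin (T + (p + a + q)) := ⟨0, by omega⟩
  let i2 : Fin (T + (p + a + q)) := ⟨T + (p + j), by have := j.isLt; omega⟩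
  mk2 i1 i2 {{(false, false)}, {(true, false)}, {(true, true)}}

/-- The randomness constraint for random bit `j`: acts on clock bit `0` and
work bit `p + a + j`, with allowed collection `{{00,01},{10},{11}}`. -/
def randC (p a q T : ℕ) (hT : 0 < T) (j : Fin q) : SetConstraint (T + (p + a + q)) :=
  let i1 : Fin (T + (p + a + q)) := ⟨0, by omega⟩
  let i2 : Fin (T + (p + a + q)) := ⟨T + (p + a + j), by have := j.isLt; omega⟩
  mk2 i1 i2 {{(false, false), (false, true)}, {(true, false)}, {(true, true)}}

/-- The propagation constraint for the `(t+1)`-st gate (`t : Fin T` zero-based):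
acts on the clock bits among `{t−1, t, t+1}` that exist and on the bits of the
gate, with allowed collection `⋃_z {{100 ‖ z, 110 ‖ G(z)}}` (the clock pattern
being shortened at the ends). -/
def propC (p a q T : ℕ) (Gs : Fin T → Gate (p + a + q)) (t : Fin T) :
    SetConstraint (T + (p + a + q)) :=
  let J : Finset (Fin (T + (p + a + q))) :=
    (Finset.univ.filter fun i : Fin (T + (p + a + q)) =>
        (i : ℕ) < T ∧ (t : ℕ) - 1 ≤ (i : ℕ) ∧ (i : ℕ) ≤ (t : ℕ) + 1)
      ∪ (Gs t).support.image (Fin.natAdd T)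
  ⟨J, Finset.image
      (fun z : Fin (p + a + q) → Bool =>
        ({restr J (snapshot p a q T t z),
          restr J (snapshot p a q T ((t : ℕ) + 1) ((Gs t).apply z))} : Finset _))
      Finset.univ⟩

/-- The output constraint: acts on clock bit `T − 1` and the output bit (work
bit `0`), with allowed collection `{{00},{01},{11}}`. -/
def outC (p a q T : ℕ) (hT : 0 < T) (hw : 0 < p + a + q) :
    SetConstraint (T + (p + a + q)) :=
  let i1 : Fin (T + (p + a + q)) := ⟨T - 1, by omega⟩
  let i2 : Fin (T + (p + a + q)) := ⟨T, by omega⟩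
  mk2 i1 i2 {{(false, false)}, {(false, true)}, {(true, true)}}

/-- The SetCSP instance `𝒞_x` associated with a reversible circuit: clock,
auxiliary, randomness, propagation and output constraints. -/
def instanceC (p a q T : ℕ) (hT : 0 < T) (hw : 0 < p + a + q)
    (Gs : Fin T → Gate (p + a + q)) : List (SetConstraint (T + (p + a + q))) :=
  ((List.finRange (T - 1)).map (clockC p a q T))
    ++ ((List.finRange a).map (auxC p a q T hT))
    ++ ((List.finRange q).map (randC p a q T hT))
    ++ ((List.finRange T).map (propC p a q T Gs))
    ++ [outC p a q T hT hw]

/-- The graph `G_𝒞` associated with a list of set-constraints: an edge joins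
`x` and `y` whenever they are `C`-neighbors for some constraint `C` of the
list. -/
def constraintGraphL {n : ℕ} (L : List (SetConstraint n)) :
    SimpleGraph (Fin n → Bool) where
  Adj x y := ∃ C ∈ L, C.Neighbors x y
  symm := by
    constructor
    rintro x y ⟨C, hC, hne, hout, Yi, hYi, hx, hy⟩
    exact ⟨C, hC, hne.symm, fun j hj => (hout j hj).symm, Yi, hYi, hy, hx⟩
  loopless := by
    constructor
    rintro x ⟨C, hC, hne, -⟩
    exact hne rfl

/-! On `R_y` the clock register is `0^T`. The clock, auxiliary and output constraints only
have singletons in `Y`, so they have no neighbours at all. Each set of the propagation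
constraint for gate `t` is a pair of strings differing in clock bit `t`, on which all strings
of `R_y` agree. What remains are the randomness constraints: the `j`-th one, whose set
`{00, 01}` lets random bit `j` vary while clock bit `0` is off, joins exactly the strings of
`R_y` whose random registers differ in bit `j` alone. -/

theorem Function.existsUnique_ne_iff {α β : Type*} {f g : α → β} :
    (∃! i, f i ≠ g i) ↔ ∃ i, f ≠ g ∧ ∀ k ≠ i, f k = g k := by
  constructor
  · rintro ⟨i, hi, huniq⟩
    exact ⟨i, fun h => hi (congrFun h i), fun k hk => by_contra fun h => hk (huniq k h)⟩
  · rintro ⟨i, hne, hagree⟩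
    have hi : f i ≠ g i := fun h => hne <| funext fun k => by
      by_cases hk : k = i
      · exact hk ▸ h
      · exact hagree k hk
    exact ⟨i, hi, fun k hk => by_contra fun h => hk (hagree k h)⟩

namespace SetConstraint

variable {n : ℕ} {C : SetConstraint n} {x y : Fin n → Bool}

theorem eq_of_res_eq (hres : C.res x = C.res y) (hout : ∀ j, j ∉ C.J → x j = y j) : x = y :=
  funext fun i => if hi : i ∈ C.J then congrFun hres ⟨i, hi⟩ else hout i hi

theorem not_neighbors_of_card_le_one (hY : ∀ Yi ∈ C.Y, Yi.card ≤ 1) : ¬ C.Neighbors x y := by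
  rintro ⟨hne, hout, Yi, hYi, hx, hy⟩
  exact hne (eq_of_res_eq (Finset.card_le_one.1 (hY Yi hYi) _ hx _ hy) hout)

theorem Neighbors.apply_ne {k : Fin n} (hk : k ∈ C.J)
    (hsep : ∀ Yi ∈ C.Y, ∀ u ∈ Yi, ∀ v ∈ Yi, u ⟨k, hk⟩ = v ⟨k, hk⟩ → u = v)
    (h : C.Neighbors x y) : x k ≠ y k := by
  obtain ⟨hne, hout, Yi, hYi, hx, hy⟩ := h
  exact fun hxy => hne (eq_of_res_eq (hsep Yi hYi _ hx _ hy hxy) hout)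

end SetConstraint

section TwoBitConstraints

variable {n : ℕ} {i1 i2 : Fin n} {groups : Finset (Finset (Bool × Bool))}

theorem mk2_res (x : Fin n → Bool) :
    (mk2 i1 i2 groups).res x = pat2 i1 i2 (x i1) (x i2) := by
  funext ⟨i, hi⟩
  simp only [mk2, Finset.mem_insert, Finset.mem_singleton] at hi
  simp only [SetConstraint.res, pat2]
  split_ifs with h
  exacts [congrArg x h, congrArg x (hi.resolve_left h)]

theorem mk2_card_le_one (hg : ∀ g ∈ groups, g.card ≤ 1) :
    ∀ Yi ∈ (mk2 i1 i2 groups).Y, Yi.card ≤ 1 := by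
  intro Yi hYi
  obtain ⟨g, hg_mem, rfl⟩ := Finset.mem_image.1 hYi
  exact Finset.card_image_le.trans (hg g hg_mem)

theorem mk2_exists_common {g : Finset (Bool × Bool)} (hg : g ∈ groups) {x y : Fin n → Bool}
    (hx : (x i1, x i2) ∈ g) (hy : (y i1, y i2) ∈ g) :
    ∃ Yi ∈ (mk2 i1 i2 groups).Y,
      (mk2 i1 i2 groups).res x ∈ Yi ∧ (mk2 i1 i2 groups).res y ∈ Yi :=
  ⟨_, Finset.mem_image_of_mem _ hg, by rw [mk2_res]; exact Finset.mem_image_of_mem _ hx,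
    by rw [mk2_res]; exact Finset.mem_image_of_mem _ hy⟩

end TwoBitConstraints

section Snapshot

variable {p a q T : ℕ}

def randomBit (p a q T : ℕ) (j : Fin q) : Fin (T + (p + a + q)) :=
  Fin.natAdd T (Fin.natAdd (p + a) j)

theorem snapshot_of_lt (τ : ℕ) (z : Fin (p + a + q) → Bool) {i : Fin (T + (p + a + q))}
    (hi : (i : ℕ) < T) : snapshot p a q T τ z i = decide ((i : ℕ) < τ) :=
  dif_pos hi

theorem snapshot_natAdd (τ : ℕ) (z : Fin (p + a + q) → Bool) (k : Fin (p + a + q)) :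
    snapshot p a q T τ z (Fin.natAdd T k) = z k := by
  simp [snapshot]

theorem initString_natAdd (y : Fin p → Bool) (r : Fin q → Bool) (j : Fin q) :
    initString p a q y r (Fin.natAdd (p + a) j) = r j := by
  simp [initString, show ¬ p + a + (j : ℕ) < p by omega]

theorem initString_castAdd (y : Fin p → Bool) (r r' : Fin q → Bool) (i : Fin (p + a)) :
    initString p a q y r (Fin.castAdd q i) = initString p a q y r' (Fin.castAdd q i) := by
  simp [initString, i.isLt]

theorem forall_snapshot_initString_eq_iff (τ : ℕ) (y : Fin p → Bool) (r r' : Fin q → Bool)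
    (P : Fin (T + (p + a + q)) → Prop) :
    (∀ i, P i → snapshot p a q T τ (initString p a q y r) i =
        snapshot p a q T τ (initString p a q y r') i) ↔
      ∀ k, P (randomBit p a q T k) → r k = r' k := by
  constructor
  · intro h k hk
    simpa [randomBit, snapshot_natAdd, initString_natAdd] using h _ hk
  · intro h i hi
    induction i using Fin.addCases with
    | left c => simp [snapshot_of_lt]
    | right w =>
      induction w using Fin.addCases with
      | left v => rw [snapshot_natAdd, snapshot_natAdd, initString_castAdd]
      | right k =>
        rw [snapshot_natAdd, snapshot_natAdd, initString_natAdd, initString_natAdd]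
        exact h k hi

theorem snapshot_initString_injective (τ : ℕ) (y : Fin p → Bool) :
    Function.Injective fun r => snapshot p a q T τ (initString p a q y r) := fun r r' h =>
  funext fun k => (forall_snapshot_initString_eq_iff τ y r r' fun _ => True).1
    (fun i _ => congrFun h i) k trivial

end Snapshot

theorem eq_of_mem_pair_of_apply_eq {α β : Type*} [DecidableEq (α → β)]
    {u₀ u₁ u v : α → β} {k : α} (h : u₀ k ≠ u₁ k)
    (hu : u ∈ ({u₀, u₁} : Finset (α → β))) (hv : v ∈ ({u₀, u₁} : Finset (α → β)))
    (huv : u k = v k) : u = v := by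
  simp only [Finset.mem_insert, Finset.mem_singleton] at hu hv
  rcases hu with rfl | rfl <;> rcases hv with rfl | rfl
  exacts [rfl, absurd huv h, absurd huv.symm h, rfl]

section CircuitConstraints

variable {p a q T : ℕ}

theorem clockC_not_neighbors (t : Fin (T - 1)) (x y : Fin (T + (p + a + q)) → Bool) :
    ¬ (clockC p a q T t).Neighbors x y :=
  SetConstraint.not_neighbors_of_card_le_one (mk2_card_le_one (by decide))

theorem auxC_not_neighbors (hT : 0 < T) (j : Fin a) (x y : Fin (T + (p + a + q)) → Bool) :
    ¬ (auxC p a q T hT j).Neighbors x y :=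
  SetConstraint.not_neighbors_of_card_le_one (mk2_card_le_one (by decide))

theorem outC_not_neighbors (hT : 0 < T) (hw : 0 < p + a + q)
    (x y : Fin (T + (p + a + q)) → Bool) :
    ¬ (outC p a q T hT hw).Neighbors x y :=
  SetConstraint.not_neighbors_of_card_le_one (mk2_card_le_one (by decide))

theorem propC_neighbors_apply_ne (Gs : Fin T → Gate (p + a + q)) (t : Fin T)
    {x y : Fin (T + (p + a + q)) → Bool} (h : (propC p a q T Gs t).Neighbors x y) :
    x ⟨t, by omega⟩ ≠ y ⟨t, by omega⟩ := by
  refine h.apply_ne (Finset.mem_union_left _ (by simp)) ?_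
  intro Yi hYi
  obtain ⟨z, -, rfl⟩ := Finset.mem_image.1 hYi
  have hclock (τ : ℕ) (z' : Fin (p + a + q) → Bool) :
      snapshot p a q T τ z' ⟨t, by omega⟩ = decide ((t : ℕ) < τ) :=
    snapshot_of_lt τ z' t.isLt
  intro u hu v hv
  refine eq_of_mem_pair_of_apply_eq ?_ hu hv
  show snapshot p a q T t z _ ≠ snapshot p a q T (t + 1) _ _
  simp [hclock]

theorem randomBit_mem_randC_J_iff (hT : 0 < T) (j k : Fin q) :
    randomBit p a q T k ∈ (randC p a q T hT j).J ↔ k = j := by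
  simp only [randC, mk2, randomBit, Finset.mem_insert, Finset.mem_singleton, Fin.ext_iff,
    Fin.val_natAdd]
  omega

theorem randC_neighbors_iff (hT : 0 < T) (y : Fin p → Bool) (r r' : Fin q → Bool) (j : Fin q) :
    (randC p a q T hT j).Neighbors (snapshot p a q T 0 (initString p a q y r))
        (snapshot p a q T 0 (initString p a q y r')) ↔
      r ≠ r' ∧ ∀ k ≠ j, r k = r' k := by
  have hclock (r : Fin q → Bool) :
      snapshot p a q T 0 (initString p a q y r) ⟨0, by omega⟩ = false :=
    (snapshot_of_lt 0 _ hT).trans (decide_eq_false (Nat.lt_irrefl 0))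
  have hcommon : ∃ Yi ∈ (randC p a q T hT j).Y,
      (randC p a q T hT j).res (snapshot p a q T 0 (initString p a q y r)) ∈ Yi ∧
        (randC p a q T hT j).res (snapshot p a q T 0 (initString p a q y r')) ∈ Yi :=
    mk2_exists_common (g := {(false, false), (false, true)}) (by simp)
      (by rw [hclock]; simp) (by rw [hclock]; simp)
  unfold SetConstraint.Neighbors
  rw [(snapshot_initString_injective 0 y).ne_iff,
    forall_snapshot_initString_eq_iff 0 y r r' (· ∉ (randC p a q T hT j).J)]
  simp only [randomBit_mem_randC_J_iff, hcommon, and_true]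

end CircuitConstraints

/-- The subgraph of `G_{𝒞_x}` induced on
`R_y = { 0^T ‖ y ‖ 0^a ‖ r : r ∈ {0,1}^q }` is the `q`-dimensional hypercube:
two vertices of `R_y` are adjacent iff their random registers differ in
exactly one bit. -/
theorem instanceC_restricted_to_Ry_is_hypercube (p a q T : ℕ)
    (hq : 0 < q) (hT : 0 < T)
    (Gs : Fin T → Gate (p + a + q)) :
    ∀ (y : Fin p → Bool) (r r' : Fin q → Bool),
      (constraintGraphL (instanceC p a q T hT (by omega) Gs)).Adj
          (snapshot p a q T 0 (initString p a q y r))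
          (snapshot p a q T 0 (initString p a q y r'))
        ↔ ∃! i : Fin q, r i ≠ r' i := by
  intro y r r'
  rw [Function.existsUnique_ne_iff]
  constructor
  · rintro ⟨C, hC, hN⟩
    simp only [instanceC, List.mem_append, List.mem_map, List.mem_finRange, true_and,
      List.mem_singleton] at hC
    rcases hC with ((((⟨t, rfl⟩ | ⟨j, rfl⟩) | ⟨j, rfl⟩) | ⟨t, rfl⟩) | rfl)
    · exact absurd hN (clockC_not_neighbors t _ _)
    · exact absurd hN (auxC_not_neighbors hT j _ _)
    · exact ⟨j, (randC_neighbors_iff hT y r r' j).1 hN⟩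
    · exact absurd ((snapshot_of_lt 0 _ t.isLt).trans (snapshot_of_lt 0 _ t.isLt).symm)
        (propC_neighbors_apply_ne Gs t hN)
    · exact absurd hN (outC_not_neighbors hT _ _ _)
  · rintro ⟨j, hj⟩
    exact ⟨randC p a q T hT j, by simp [instanceC], (randC_neighbors_iff hT y r r' j).2 hj⟩
end
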